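/- arXiv:2507.00602 — 12 statements merged into one kernel-verified Lean document; each statement's English description precedes it below -/
import Mathlib

section
/- For a finite-dimensional Lie algebra L over a field F of characteristic ≠ 2, the breadth b(L) equals 1 if and only if dim [L,L] = 1. -/
open Module

/-- The breadth of an element `x`: the rank of `ad x`. -/
noncomputable def elemBreadth (F : Type*) {L : Type*} [Field F] [LieRing L] [LieAlgebra F L]
    (x : L) : ℕ :=
  finrank F (LinearMap.range (LieAlgebra.ad F L x))

/-- `L` has breadth `n`: `n` is the maximum of the ranks of the maps `ad x`, `x ∈ L`. -/
def HasBreadth (F L : Type*) [Field F] [LieRing L] [LieAlgebra F L] (n : ℕ) : Prop :=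
  (∀ x : L, elemBreadth F x ≤ n) ∧ ∃ x : L, elemBreadth F x = n


/-!
If every `ad x` has rank at most one and `⁅x, y⁆ ≠ 0`, then every bracket lies on the line
`F ∙ ⁅x, y⁆`: for `u` with `⁅u, y⁆ ≠ 0` the range of `ad u` is the line through `⁅u, y⁆`, which
lies in the range of `ad y`, the line through `⁅x, y⁆`; an element `a` commuting with `y` is
handled through `ad a = ad (a + x) - ad x`. Conversely every `ad x` takes values in `[L, L]`.
-/

open LieAlgebra

section CommRing

variable {R L : Type*} [CommRing R] [LieRing L] [LieAlgebra R L]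

lemma lie_mem_range_ad (x y : L) : ⁅x, y⁆ ∈ LinearMap.range (ad R L x) :=
  ⟨y, ad_apply R L x y⟩

lemma range_ad_le_derivedSeries_one (x : L) :
    LinearMap.range (ad R L x) ≤ (derivedSeries R L 1 : Submodule R L) := by
  rintro _ ⟨y, rfl⟩
  rw [coe_derivedSeries_one_eq]
  exact Submodule.subset_span ⟨x, y, rfl⟩

end CommRing

section Breadth

variable {F L : Type*} [Field F] [LieRing L] [LieAlgebra F L]

lemma exists_lie_ne_zero_of_finrank_derivedSeries_one_pos
    (h : 0 < finrank F (derivedSeries F L 1)) : ∃ x y : L, ⁅x, y⁆ ≠ 0 := by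
  by_contra! hab
  have hbot : (derivedSeries F L 1 : Submodule F L) = ⊥ := by
    rw [coe_derivedSeries_one_eq, Submodule.span_eq_bot]
    rintro _ ⟨x, y, rfl⟩
    exact hab x y
  exact h.ne' (by rw [← finrank_bot F L, ← hbot]; rfl)

variable [FiniteDimensional F L]

lemma elemBreadth_le_finrank_derivedSeries_one (x : L) :
    elemBreadth F x ≤ finrank F (derivedSeries F L 1) :=
  Submodule.finrank_mono (range_ad_le_derivedSeries_one x)

lemma elemBreadth_pos_iff {x : L} : 0 < elemBreadth F x ↔ ∃ y : L, ⁅x, y⁆ ≠ 0 := by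
  simp [elemBreadth, pos_iff_ne_zero, LinearMap.range_eq_bot, LinearMap.ext_iff]

lemma range_ad_eq_span_of_elemBreadth_le_one {x y : L} (hx : elemBreadth F x ≤ 1)
    (hxy : ⁅x, y⁆ ≠ 0) : LinearMap.range (ad F L x) = F ∙ ⁅x, y⁆ :=
  (Submodule.eq_of_le_of_finrank_le
    ((Submodule.span_singleton_le_iff_mem _ _).mpr (lie_mem_range_ad x y))
    (by rwa [finrank_span_singleton hxy])).symm

lemma range_ad_le_span_of_lie_ne_zero (hL : ∀ z : L, elemBreadth F z ≤ 1) {x y u : L}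
    (hxy : ⁅x, y⁆ ≠ 0) (huy : ⁅u, y⁆ ≠ 0) : LinearMap.range (ad F L u) ≤ F ∙ ⁅x, y⁆ := by
  have hyx : ⁅y, x⁆ ≠ 0 := by rwa [← lie_skew, neg_ne_zero]
  have hyu : ⁅y, u⁆ ∈ F ∙ ⁅y, x⁆ :=
    range_ad_eq_span_of_elemBreadth_le_one (hL y) hyx ▸ lie_mem_range_ad y u
  rw [range_ad_eq_span_of_elemBreadth_le_one (hL u) huy, Submodule.span_singleton_le_iff_mem,
    ← lie_skew u y, Submodule.neg_mem_iff, ← lie_skew x y, ← Set.neg_singleton,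
    Submodule.span_neg]
  exact hyu

lemma lie_mem_span_of_forall_elemBreadth_le_one (hL : ∀ z : L, elemBreadth F z ≤ 1) {x y : L}
    (hxy : ⁅x, y⁆ ≠ 0) (a b : L) : ⁅a, b⁆ ∈ F ∙ ⁅x, y⁆ := by
  by_cases hay : ⁅a, y⁆ = 0
  · have hay' : ⁅a + x, y⁆ ≠ 0 := by rwa [add_lie, hay, zero_add]
    have h₁ := range_ad_le_span_of_lie_ne_zero hL hxy hay' (lie_mem_range_ad (a + x) b)
    have h₂ := range_ad_le_span_of_lie_ne_zero hL hxy hxy (lie_mem_range_ad x b)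
    simpa [add_lie] using sub_mem h₁ h₂
  · exact range_ad_le_span_of_lie_ne_zero hL hxy hay (lie_mem_range_ad a b)

lemma finrank_derivedSeries_one_eq_one_of_forall_elemBreadth_le_one
    (hL : ∀ z : L, elemBreadth F z ≤ 1) {x y : L} (hxy : ⁅x, y⁆ ≠ 0) :
    finrank F (derivedSeries F L 1) = 1 := by
  have hD : (derivedSeries F L 1 : Submodule F L) = F ∙ ⁅x, y⁆ := by
    refine le_antisymm ?_ ?_
    · rw [coe_derivedSeries_one_eq, Submodule.span_le]
      rintro _ ⟨a, b, rfl⟩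
      exact lie_mem_span_of_forall_elemBreadth_le_one hL hxy a b
    · rw [Submodule.span_singleton_le_iff_mem]
      exact range_ad_le_derivedSeries_one x (lie_mem_range_ad x y)
  have h := finrank_span_singleton (K := F) hxy
  rwa [← hD] at h

end Breadth

theorem stmt1_general (F L : Type*) [Field F] [LieRing L] [LieAlgebra F L]
    [FiniteDimensional F L] :
    HasBreadth F L 1 ↔ finrank F (LieAlgebra.derivedSeries F L 1) = 1 := by
  constructor
  · rintro ⟨hL, x, hx⟩
    obtain ⟨y, hxy⟩ := elemBreadth_pos_iff.mp (hx ▸ one_pos)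
    exact finrank_derivedSeries_one_eq_one_of_forall_elemBreadth_le_one hL hxy
  · intro hD
    obtain ⟨x, y, hxy⟩ := exists_lie_ne_zero_of_finrank_derivedSeries_one_pos (hD ▸ one_pos)
    have hL (z : L) : elemBreadth F z ≤ 1 := hD ▸ elemBreadth_le_finrank_derivedSeries_one z
    exact ⟨hL, x, (hL x).antisymm (elemBreadth_pos_iff.mpr ⟨y, hxy⟩)⟩

theorem stmt1 (F L : Type*) [Field F] [LieRing L] [LieAlgebra F L]
    [FiniteDimensional F L] (hchar : ringChar F ≠ 2) :
    HasBreadth F L 1 ↔ finrank F (LieAlgebra.derivedSeries F L 1) = 1 :=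
  stmt1_general F L
end

section
/- Let L be a finite-dimensional Lie algebra of breadth 1 over a field of characteristic ≠ 2. Then L is nilpotent if and only if [L,L] ⊆ Z(L). -/
open Module

section Aux

variable {F L : Type*} [Field F] [LieRing L] [LieAlgebra F L] [FiniteDimensional F L]

/-- If `ad x` has rank at most one, any two of its values are linearly dependent. -/
lemma breadth_dep (x : L) (h : elemBreadth F x ≤ 1) (a b : L) :
    ¬ LinearIndependent F ![⁅x, a⁆, ⁅x, b⁆] := by
  intro hind
  have h1 : (⁅x, a⁆ : L) ∈ LinearMap.range (LieAlgebra.ad F L x) := ⟨a, rfl⟩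
  have h2 : (⁅x, b⁆ : L) ∈ LinearMap.range (LieAlgebra.ad F L x) := ⟨b, rfl⟩
  have hspan : Submodule.span F (Set.range ![⁅x, a⁆, ⁅x, b⁆]) ≤
      LinearMap.range (LieAlgebra.ad F L x) := by
    rw [Submodule.span_le]
    refine Set.range_subset_iff.2 fun i => ?_
    fin_cases i
    · exact h1
    · exact h2
  have hcard := finrank_span_eq_card hind
  have hmono := Submodule.finrank_mono hspan
  rw [hcard] at hmono
  simp only [Fintype.card_fin] at hmono
  exact absurd (hmono.trans h) (by norm_num)

lemma not_indep_pair {u v : L} (hu : u ≠ 0) (h : ¬ LinearIndependent F ![u, v]) :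
    ∃ c : F, v = c • u := by
  by_contra hc
  push_neg at hc
  exact h ((LinearIndependent.pair_iff' hu).2 fun a ha => hc a ha.symm)

/-- All nonzero brackets in a breadth-≤1 Lie algebra are proportional. -/
lemma line (hb1 : ∀ x : L, elemBreadth F x ≤ 1) {x a y b : L}
    (hu : ⁅x, a⁆ ≠ (0 : L)) (hv : ⁅y, b⁆ ≠ (0 : L)) :
    ∃ c : F, ⁅y, b⁆ = c • ⁅x, a⁆ := by
  set u : L := ⁅x, a⁆ with hu_def
  set v : L := ⁅y, b⁆ with hv_def
  by_cases hind : LinearIndependent F ![u, v]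
  · exfalso
    have hpair := LinearIndependent.pair_iff.1 hind
    obtain ⟨fb, hfb⟩ : ∃ c : F, ⁅x, b⁆ = c • u := not_indep_pair hu (breadth_dep x (hb1 x) a b)
    obtain ⟨ga, hga⟩ : ∃ c : F, ⁅y, a⁆ = c • v := not_indep_pair hv (breadth_dep y (hb1 y) b a)
    -- use the rank bound for `ad (x + y)` to show `ga ≠ 0`
    have hga0 : ga ≠ 0 := by
      have hdep := breadth_dep (x + y) (hb1 (x + y)) a b
      rw [LinearIndependent.pair_iff] at hdep
      push_neg at hdep
      obtain ⟨s, t, hst, hst0⟩ := hdep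
      have e1 : ⁅x + y, a⁆ = u + ga • v := by rw [add_lie, hga]
      have e2 : ⁅x + y, b⁆ = fb • u + v := by rw [add_lie, hfb]
      rw [e1, e2] at hst
      have hst' : (s + t * fb) • u + (s * ga + t) • v = 0 := by
        rw [add_smul, add_smul, mul_smul, mul_smul]
        rw [smul_add, smul_add] at hst
        rw [← hst]
        abel
      obtain ⟨hA, hB⟩ := hpair _ _ hst'
      intro hga0
      rw [hga0, mul_zero, zero_add] at hB
      rw [hB, zero_mul, add_zero] at hA
      exact hst0 hA hB
    -- now `ad a` has rank ≥ 2, contradiction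
    have hdep := breadth_dep a (hb1 a) x y
    have hax' : (⁅a, x⁆ : L) = -u := by
      rw [hu_def, ← lie_skew x a, neg_neg]
    have hax : (⁅a, x⁆ : L) ≠ 0 := by
      rw [hax', neg_ne_zero]; exact hu
    obtain ⟨c, hc⟩ := not_indep_pair hax hdep
    have hay : (⁅a, y⁆ : L) = -(ga • v) := by
      rw [← lie_skew a y, hga]
    have h1 : -(ga • v) = c • -u := by rw [← hay, hc, hax']
    rw [smul_neg] at h1
    have h2 : ga • v = c • u := neg_injective h1
    have hcomb : c • u + (-ga) • v = 0 := by
      rw [neg_smul, ← h2, add_neg_cancel]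
    obtain ⟨-, h3⟩ := hpair _ _ hcomb
    exact hga0 (neg_eq_zero.mp h3)
  · exact not_indep_pair hu hind

end Aux

theorem stmt2 (F L : Type*) [Field F] [LieRing L] [LieAlgebra F L]
    [FiniteDimensional F L] (hchar : ringChar F ≠ 2) (hb : HasBreadth F L 1) :
    LieRing.IsNilpotent L ↔
      LieAlgebra.derivedSeries F L 1 ≤ LieAlgebra.center F L := by
  obtain ⟨hb1, -⟩ := hb
  have hds : LieAlgebra.derivedSeries F L 1 = ⁅(⊤ : LieIdeal F L), (⊤ : LieIdeal F L)⁆ := by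
    rw [LieAlgebra.derivedSeries_def, LieAlgebra.derivedSeriesOfIdeal_succ,
      LieAlgebra.derivedSeriesOfIdeal_zero]
  constructor
  · intro hnil
    -- key: every bracket is killed by every `ad`
    have key : ∀ z x y : L, ⁅z, ⁅x, y⁆⁆ = 0 := by
      intro z x y
      by_contra h0
      have hw : (⁅x, y⁆ : L) ≠ 0 := by
        intro h; rw [h, lie_zero] at h0; exact h0 rfl
      obtain ⟨d, hd⟩ := line hb1 hw h0
      have hd0 : d ≠ 0 := by
        intro h; rw [h, zero_smul] at hd; exact h0 hd
      have hmem : ∀ n, (⁅x, y⁆ : L) ∈ LieModule.lowerCentralSeries F L L n := by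
        intro n
        induction n with
        | zero => simp
        | succ n ih =>
          have hz : (⁅z, ⁅x, y⁆⁆ : L) ∈ LieModule.lowerCentralSeries F L L (n + 1) := by
            rw [LieModule.lowerCentralSeries_succ]
            exact LieSubmodule.lie_mem_lie (LieSubmodule.mem_top z) ih
          have : (⁅x, y⁆ : L) = d⁻¹ • ⁅z, ⁅x, y⁆⁆ := by
            rw [hd, smul_smul, inv_mul_cancel₀ hd0, one_smul]
          rw [this]
          exact (LieModule.lowerCentralSeries F L L (n + 1)).smul_mem _ hz
      obtain ⟨k, hk⟩ := (LieModule.isNilpotent_iff F L L).mp hnil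
      have := hmem k
      rw [hk, LieSubmodule.mem_bot] at this
      exact hw this
    rw [hds, LieSubmodule.lie_le_iff]
    intro x _ m _
    rw [LieModule.mem_maxTrivSubmodule]
    intro z
    exact key z x m
  · intro h
    apply (LieModule.isNilpotent_iff F L L).mpr
    refine ⟨2, ?_⟩
    have h1 : LieModule.lowerCentralSeries F L L 1 ≤ LieAlgebra.center F L := by
      rw [LieModule.lowerCentralSeries_succ, LieModule.lowerCentralSeries_zero, ← hds]
      exact h
    rw [eq_bot_iff, LieModule.lowerCentralSeries_succ]
    refine le_trans (LieSubmodule.mono_lie_right _ h1) ?_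
    rw [LieSubmodule.lie_le_iff]
    intro x _ m hm
    rw [LieSubmodule.mem_bot]
    exact (LieModule.mem_maxTrivSubmodule F L L m).1 hm x
end

section
/- If L is a finite-dimensional Lie algebra over a field of characteristic ≠ 2 with breadth b(L) ≤ 1, then L is solvable. -/
open Module

section Aux

variable {F L : Type*} [Field F] [LieRing L] [LieAlgebra F L] [FiniteDimensional F L]

/-- If `ad c` has rank ≤ 1 and `y` is a nonzero element of its range, the range is `span {y}`. -/
lemma range_ad_eq_span (hb : ∀ x : L, elemBreadth F x ≤ 1) (c y : L) (hy : y ≠ 0)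
    (hmem : y ∈ LinearMap.range (LieAlgebra.ad F L c)) :
    LinearMap.range (LieAlgebra.ad F L c) = Submodule.span F {y} := by
  refine (Submodule.eq_of_le_of_finrank_le ((Submodule.span_singleton_le_iff_mem _ _).2 hmem)
    ?_).symm
  rw [finrank_span_singleton hy]
  exact hb c

lemma range_ad_eq (hb : ∀ x : L, elemBreadth F x ≤ 1) {a b x y : L}
    (hax : ⁅a, x⁆ ≠ 0) (hby : ⁅b, y⁆ ≠ 0) :
    LinearMap.range (LieAlgebra.ad F L a) = LinearMap.range (LieAlgebra.ad F L b) := by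
  by_contra hne
  set A := LinearMap.range (LieAlgebra.ad F L a) with hA
  set B := LinearMap.range (LieAlgebra.ad F L b) with hB
  have hmemA : ∀ z : L, ⁅a, z⁆ ∈ A := fun z => ⟨z, rfl⟩
  have hmemB : ∀ z : L, ⁅b, z⁆ ∈ B := fun z => ⟨z, rfl⟩
  -- distinct lines intersect trivially
  have hAB : A ⊓ B = ⊥ := by
    by_contra hbot
    obtain ⟨z, hz, hz0⟩ := Submodule.exists_mem_ne_zero_of_ne_bot hbot
    exact hne ((range_ad_eq_span hb a z hz0 hz.1).trans
      (range_ad_eq_span hb b z hz0 hz.2).symm)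
  -- find `u` with `⁅a,u⁆ ≠ 0` and `⁅b,u⁆ ≠ 0`
  obtain ⟨u, hau, hbu⟩ : ∃ u : L, ⁅a, u⁆ ≠ 0 ∧ ⁅b, u⁆ ≠ 0 := by
    by_cases h1 : ⁅b, x⁆ = 0
    · by_cases h2 : ⁅a, y⁆ = 0
      · refine ⟨x + y, ?_, ?_⟩
        · rwa [lie_add, h2, add_zero]
        · rwa [lie_add, h1, zero_add]
      · exact ⟨y, h2, hby⟩
    · exact ⟨x, hax, h1⟩
  -- `range (ad (a+u)) = A`, hence `⁅u,z⁆ ∈ A` for all `z`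
  have key : ∀ (c : L) (C : Submodule F L), C = LinearMap.range (LieAlgebra.ad F L c) →
      ⁅c, u⁆ ≠ 0 → ∀ z : L, ⁅u, z⁆ ∈ C := by
    intro c C hC hcu z
    have h1 : ⁅c + u, c⁆ = -⁅c, u⁆ := by rw [add_lie, lie_self, zero_add, lie_skew]
    have hmem1 : (-⁅c, u⁆ : L) ∈ LinearMap.range (LieAlgebra.ad F L (c + u)) :=
      ⟨c, h1⟩
    have hne0 : (-⁅c, u⁆ : L) ≠ 0 := neg_ne_zero.2 hcu
    have hr1 : LinearMap.range (LieAlgebra.ad F L (c + u)) = Submodule.span F {-⁅c, u⁆} :=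
      range_ad_eq_span hb _ _ hne0 hmem1
    have hr2 : C = Submodule.span F {-⁅c, u⁆} := by
      rw [hC]
      exact range_ad_eq_span hb c _ hne0 (Submodule.neg_mem _ ⟨u, rfl⟩)
    have hz : ⁅c + u, z⁆ ∈ C := by
      rw [hr2, ← hr1]; exact ⟨z, rfl⟩
    have hcz : ⁅c, z⁆ ∈ C := hC ▸ ⟨z, rfl⟩
    have : ⁅u, z⁆ = ⁅c + u, z⁆ - ⁅c, z⁆ := by rw [add_lie]; abel
    rw [this]
    exact Submodule.sub_mem _ hz hcz
  have hub_A : ⁅u, b⁆ ∈ A := key a A hA hau b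
  have hub_B : ⁅u, b⁆ ∈ B := key b B hB hbu b
  have : ⁅u, b⁆ = 0 := by
    have := hAB ▸ (Submodule.mem_inf.2 ⟨hub_A, hub_B⟩); simpa using this
  exact hbu (by rw [← lie_skew, this, neg_zero])

end Aux

theorem stmt3 (F L : Type*) [Field F] [LieRing L] [LieAlgebra F L]
    [FiniteDimensional F L] (hchar : ringChar F ≠ 2)
    (hb : ∀ x : L, elemBreadth F x ≤ 1) :
    LieAlgebra.IsSolvable L := by
  -- all brackets lie in a single line
  obtain ⟨e, he⟩ : ∃ e : L, ∀ a x : L, ⁅a, x⁆ ∈ Submodule.span F {e} := by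
    by_cases h : ∀ a x : L, ⁅a, x⁆ = 0
    · exact ⟨0, fun a x => by rw [h a x]; exact Submodule.zero_mem _⟩
    · push_neg at h
      obtain ⟨a₀, x₀, h0⟩ := h
      refine ⟨⁅a₀, x₀⁆, fun a x => ?_⟩
      by_cases hax : ⁅a, x⁆ = 0
      · rw [hax]; exact Submodule.zero_mem _
      · have h1 : LinearMap.range (LieAlgebra.ad F L a)
            = LinearMap.range (LieAlgebra.ad F L a₀) := range_ad_eq hb hax h0
        have h2 : LinearMap.range (LieAlgebra.ad F L a₀) = Submodule.span F {⁅a₀, x₀⁆} :=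
          range_ad_eq_span hb a₀ _ h0 ⟨x₀, rfl⟩
        exact h2 ▸ h1 ▸ (⟨x, rfl⟩ : ⁅a, x⁆ ∈ LinearMap.range (LieAlgebra.ad F L a))
  -- the line is an abelian ideal containing `[L, L]`
  let I : LieIdeal F L :=
    { Submodule.span F {e} with
      lie_mem := fun {x m} _ => he x m }
  have hD1 : LieAlgebra.derivedSeries F L 1 ≤ I := by
    have : LieAlgebra.derivedSeries F L 1 = ⁅(⊤ : LieIdeal F L), (⊤ : LieIdeal F L)⁆ := by
      rw [LieAlgebra.derivedSeries_def, LieAlgebra.derivedSeriesOfIdeal_succ,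
        LieAlgebra.derivedSeriesOfIdeal_zero]
    rw [this, LieSubmodule.lie_le_iff]
    exact fun x _ m _ => he x m
  have hII : ⁅I, I⁆ = (⊥ : LieIdeal F L) := by
    rw [LieSubmodule.lie_eq_bot_iff]
    intro x hx m hm
    obtain ⟨c, hc⟩ := Submodule.mem_span_singleton.1 hx
    obtain ⟨d, hd⟩ := Submodule.mem_span_singleton.1 hm
    rw [← hc, ← hd, smul_lie, lie_smul, lie_self, smul_zero, smul_zero]
  have hbot : LieAlgebra.derivedSeries F L 2 = ⊥ := by
    have h2 : LieAlgebra.derivedSeries F L 2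
        = ⁅LieAlgebra.derivedSeries F L 1, LieAlgebra.derivedSeries F L 1⁆ := by
      rw [LieAlgebra.derivedSeries_def, LieAlgebra.derivedSeriesOfIdeal_succ]
    rw [h2, ← le_bot_iff, ← hII]
    exact LieSubmodule.mono_lie hD1 hD1
  exact LieAlgebra.IsSolvable.mk hbot
end

section
/- A finite-dimensional Lie algebra L is pure (has no nonzero abelian ideal as a Lie algebra direct summand) if and only if Z(L) ⊆ [L,L]. -/
open Module

theorem stmt5 (F L : Type*) [Field F] [LieRing L] [LieAlgebra F L]
    [FiniteDimensional F L] :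
    (¬ ∃ M A : LieIdeal F L, IsLieAbelian A ∧ A ≠ ⊥ ∧ M ⊓ A = ⊥ ∧ M ⊔ A = ⊤) ↔
      LieAlgebra.center F L ≤ LieAlgebra.derivedSeries F L 1 := by
  have hder : LieAlgebra.derivedSeries F L 1 = ⁅(⊤ : LieIdeal F L), ⊤⁆ := by
    simp [LieAlgebra.derivedSeries_def, LieAlgebra.derivedSeriesOfIdeal_succ]
  constructor
  · intro h
    by_contra hc
    rw [SetLike.not_le_iff_exists] at hc
    obtain ⟨z, hz, hzD⟩ := hc
    apply h
    set D' : Submodule F L := (LieAlgebra.derivedSeries F L 1 : Submodule F L) with hD'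
    set S : Submodule F L := Submodule.span F {z} with hS
    obtain ⟨C, hC⟩ := (D' ⊔ S).exists_isCompl
    have hSc : ∀ m ∈ S, ∀ x : L, ⁅x, m⁆ = 0 := by
      intro m hm
      have : m ∈ LieAlgebra.center F L := by
        have h1 : S ≤ (LieAlgebra.center F L : Submodule F L) :=
          Submodule.span_le.mpr (by simpa using hz)
        exact h1 hm
      exact this
    have hlieS : ∀ (x m : L), m ∈ S → ⁅x, m⁆ ∈ S := by
      intro x m hm
      rw [hSc m hm x]
      exact S.zero_mem
    have hlieM : ∀ (x m : L), m ∈ D' ⊔ C → ⁅x, m⁆ ∈ D' ⊔ C := by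
      intro x m _
      refine Submodule.mem_sup_left ?_
      show ⁅x, m⁆ ∈ LieAlgebra.derivedSeries F L 1
      rw [hder]
      exact LieSubmodule.lie_mem_lie (LieSubmodule.mem_top x) (LieSubmodule.mem_top m)
    set Mi : LieIdeal F L := ⟨D' ⊔ C, fun {x m} hm => hlieM x m hm⟩ with hMi
    set Ai : LieIdeal F L := ⟨S, fun {x m} hm => hlieS x m hm⟩ with hAi
    have hAiS : (Ai : Submodule F L) = S := rfl
    have hMiS : (Mi : Submodule F L) = D' ⊔ C := rfl
    refine ⟨Mi, Ai, ?_, ?_, ?_, ?_⟩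
    · constructor
      intro a b
      apply Subtype.ext
      show ⁅(a : L), (b : L)⁆ = 0
      exact hSc (b : L) b.2 (a : L)
    · intro hbot
      apply hzD
      have hzA : z ∈ Ai := Submodule.mem_span_singleton_self z
      rw [hbot] at hzA
      rw [LieSubmodule.mem_bot] at hzA
      rw [hzA]
      exact (LieAlgebra.derivedSeries F L 1).zero_mem
    · rw [← LieSubmodule.toSubmodule_inj, LieSubmodule.inf_toSubmodule,
        LieSubmodule.bot_toSubmodule]
      show (D' ⊔ C) ⊓ S = ⊥
      rw [eq_bot_iff]
      rintro x ⟨hx1, hx2⟩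
      have hx3 : x ∈ (D' ⊔ C) ⊓ (D' ⊔ S) := ⟨hx1, Submodule.mem_sup_right hx2⟩
      rw [sup_inf_assoc_of_le C (le_sup_left : D' ≤ D' ⊔ S), inf_comm C,
        disjoint_iff.mp hC.disjoint, sup_bot_eq] at hx3
      obtain ⟨c, rfl⟩ := Submodule.mem_span_singleton.mp hx2
      rcases eq_or_ne c 0 with rfl | hc
      · simp
      · exact absurd (by simpa [hc] using D'.smul_mem c⁻¹ hx3 : z ∈ D') hzD
    · rw [← LieSubmodule.toSubmodule_inj, LieSubmodule.sup_toSubmodule,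
        LieSubmodule.top_toSubmodule]
      show D' ⊔ C ⊔ S = ⊤
      rw [sup_right_comm]
      exact codisjoint_iff.mp hC.codisjoint
  · rintro h ⟨M, A, habel, hAne, hMA, hMAtop⟩
    apply hAne
    rw [← le_bot_iff, ← hMA, le_inf_iff]
    refine ⟨?_, le_refl A⟩
    have hAZ : A ≤ LieAlgebra.center F L := by
      intro a ha
      show ∀ x : L, ⁅x, a⁆ = 0
      intro x
      have hx : x ∈ M ⊔ A := hMAtop ▸ LieSubmodule.mem_top x
      obtain ⟨m, hm, a', ha', rfl⟩ := (LieSubmodule.mem_sup _ _ _).mp hx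
      rw [add_lie]
      have h1 : ⁅m, a⁆ ∈ M ⊓ A :=
        ⟨(by rw [← lie_skew]; exact neg_mem (M.lie_mem hm)), A.lie_mem ha⟩
      rw [hMA, LieSubmodule.mem_bot] at h1
      have h2 : ⁅a', a⁆ = 0 := by
        have h3 := habel.trivial (⟨a', ha'⟩ : A) (⟨a, ha⟩ : A)
        exact congrArg Subtype.val h3
      rw [h1, h2, add_zero]
    have hDM : LieAlgebra.derivedSeries F L 1 ≤ M := by
      rw [hder]
      conv_lhs => rw [show (⊤ : LieIdeal F L) = M ⊔ A from hMAtop.symm]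
      rw [LieSubmodule.lie_sup]
      refine sup_le (LieSubmodule.lie_le_right _ _) ?_
      refine le_trans (LieSubmodule.lie_le_iff _ _ _ |>.mpr ?_) bot_le
      intro x _ a ha
      rw [hAZ ha x]
      exact (⊥ : LieIdeal F L).zero_mem
    exact le_trans hAZ (le_trans h hDM)
end

section
/- If L = L₁ ⊕ L₂ is a direct sum of finite-dimensional Lie algebras, then b(L) = b(L₁) + b(L₂), where b denotes the breadth. -/
open Module

/-!
`ad x` acts on `⨁ i, L i` componentwise, so its range is the direct sum of the ranges of the
maps `ad (x i)` and ranks add up. This bounds the breadth of the sum by the sum of the breadths,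
and an element whose components are maximizers in the summands attains that bound.
-/

open DirectSum

theorem DFinsupp.finrank_range_mapRange_linearMap {F ι : Type*} [Field F] [Fintype ι]
    {M N : ι → Type*} [∀ i, AddCommGroup (M i)] [∀ i, Module F (M i)]
    [∀ i, AddCommGroup (N i)] [∀ i, Module F (N i)] [∀ i, FiniteDimensional F (M i)]
    (f : ∀ i, M i →ₗ[F] N i) :
    finrank F (LinearMap.range (DFinsupp.mapRange.linearMap f)) =
      ∑ i, finrank F (LinearMap.range (f i)) := by
  have hfactor : DFinsupp.mapRange.linearMap f =
      (DFinsupp.mapRange.linearMap fun i => (LinearMap.range (f i)).subtype) ∘ₗ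
        DFinsupp.mapRange.linearMap fun i => (f i).rangeRestrict := by
    rw [← DFinsupp.mapRange.linearMap_comp]
    rfl
  have hsurj : LinearMap.range (DFinsupp.mapRange.linearMap fun i => (f i).rangeRestrict) = ⊤ :=
    LinearMap.range_eq_top.2 <| (DFinsupp.mapRange_surjective _ fun i => map_zero _).2 fun i =>
      (f i).surjective_rangeRestrict
  have hinj : Function.Injective
      (DFinsupp.mapRange.linearMap fun i => (LinearMap.range (f i)).subtype) :=
    (DFinsupp.mapRange_injective _ fun i => map_zero _).2 fun i => Subtype.val_injective
  rw [hfactor, LinearMap.range_comp_of_range_eq_top _ hsurj, LinearMap.finrank_range_of_inj hinj]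
  exact finrank_directSum F fun i => LinearMap.range (f i)

theorem DirectSum.ad_eq_mapRange_linearMap {R ι : Type*} [CommRing R] (L : ι → Type*)
    [∀ i, LieRing (L i)] [∀ i, LieAlgebra R (L i)] (x : ⨁ i, L i) :
    LieAlgebra.ad R (⨁ i, L i) x =
      DFinsupp.mapRange.linearMap fun i => LieAlgebra.ad R (L i) (x i) := by
  ext y i
  exact DirectSum.bracket_apply L x y i

theorem elemBreadth_directSum {F ι : Type*} [Field F] [Fintype ι] (L : ι → Type*)
    [∀ i, LieRing (L i)] [∀ i, LieAlgebra F (L i)] [∀ i, FiniteDimensional F (L i)]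
    (x : ⨁ i, L i) : elemBreadth F x = ∑ i, elemBreadth F (x i) := by
  rw [elemBreadth, DirectSum.ad_eq_mapRange_linearMap]
  exact DFinsupp.finrank_range_mapRange_linearMap _

theorem HasBreadth.directSum {F ι : Type*} [Field F] [Fintype ι] {L : ι → Type*}
    [∀ i, LieRing (L i)] [∀ i, LieAlgebra F (L i)] [∀ i, FiniteDimensional F (L i)]
    {b : ι → ℕ} (h : ∀ i, HasBreadth F (L i) (b i)) : HasBreadth F (⨁ i, L i) (∑ i, b i) := by
  refine ⟨fun x => ?_, ?_⟩
  · rw [elemBreadth_directSum]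
    exact Finset.sum_le_sum fun i _ => (h i).1 (x i)
  · choose y hy using fun i => (h i).2
    refine ⟨DFinsupp.equivFunOnFintype.symm y, ?_⟩
    rw [elemBreadth_directSum]
    exact Finset.sum_congr rfl fun i _ => hy i

open DirectSum in
theorem stmt6 (F : Type*) [Field F] (Ls : Fin 2 → Type*)
    [∀ i, LieRing (Ls i)] [∀ i, LieAlgebra F (Ls i)]
    [∀ i, FiniteDimensional F (Ls i)] (m n : ℕ)
    (h1 : HasBreadth F (Ls 0) m) (h2 : HasBreadth F (Ls 1) n) :
    HasBreadth F (⨁ i, Ls i) (m + n) := by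
  have h : HasBreadth F (⨁ i, Ls i) (∑ i, ![m, n] i) :=
    HasBreadth.directSum (Fin.forall_fin_two.2 ⟨h1, h2⟩)
  simpa using h
end

section
/- Let L be an n-dimensional (n ≥ 2) nonnilpotent solvable Lie algebra of breadth 1 over a field of characteristic ≠ 2. Then L has a basis {x, y, z₁, …, z_{n−2}} with the only nonzero bracket [x,y] = x and z₁, …, z_{n−2} ∈ Z(L). -/
open Module

section Aux

variable {F L : Type*} [Field F] [LieRing L] [LieAlgebra F L] [FiniteDimensional F L]

/-- If `ad a` has rank at most one and `⁅a, c⁆ ≠ 0`, then the range of `ad a` is the span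
of `⁅a, c⁆`. -/
lemma range_ad_eq_span_s8 (a c : L) (h1 : finrank F (LinearMap.range (LieAlgebra.ad F L a)) ≤ 1)
    (hc : ⁅a, c⁆ ≠ 0) :
    LinearMap.range (LieAlgebra.ad F L a) = Submodule.span F {⁅a, c⁆} := by
  have hmem : ⁅a, c⁆ ∈ LinearMap.range (LieAlgebra.ad F L a) :=
    ⟨c, by simp [LieAlgebra.ad_apply]⟩
  have hle : Submodule.span F {⁅a, c⁆} ≤ LinearMap.range (LieAlgebra.ad F L a) := by
    rwa [Submodule.span_singleton_le_iff_mem]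
  exact (Submodule.eq_of_le_of_finrank_le hle
    (by rw [finrank_span_singleton hc]; exact h1)).symm

end Aux

theorem stmt8 (F L : Type*) [Field F] [LieRing L] [LieAlgebra F L]
    [FiniteDimensional F L] (hchar : ringChar F ≠ 2) (n : ℕ) (hn : 2 ≤ n)
    (hdim : finrank F L = n) [LieAlgebra.IsSolvable L]
    (hnn : ¬ LieRing.IsNilpotent L) (hb : HasBreadth F L 1) :
    ∃ B : Basis (Fin n) F L,
      ⁅B ⟨0, by omega⟩, B ⟨1, by omega⟩⁆ = B ⟨0, by omega⟩ ∧
      ∀ i : Fin n, 2 ≤ (i : ℕ) → B i ∈ LieAlgebra.center F L := by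
  classical
  have hble : ∀ a : L, finrank F (LinearMap.range (LieAlgebra.ad F L a)) ≤ 1 := hb.1
  -- Engel's theorem: some `ad a` is not nilpotent
  obtain ⟨a, ha⟩ : ∃ a : L, ¬ IsNilpotent (LieAlgebra.ad F L a) := by
    by_contra h
    push_neg at h
    exact hnn ((LieAlgebra.isNilpotent_iff_forall (R := F)).2 h)
  -- the range of `ad a` is spanned by some `v ≠ 0`
  have hane : LieAlgebra.ad F L a ≠ 0 := fun h => ha (h ▸ ⟨1, by simp⟩)
  obtain ⟨b₀, hb₀⟩ : ∃ b₀ : L, ⁅a, b₀⁆ ≠ 0 := by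
    by_contra h
    push_neg at h
    exact hane (by ext b; simpa [LieAlgebra.ad_apply] using h b)
  set v : L := ⁅a, b₀⁆ with hv
  have hrange : LinearMap.range (LieAlgebra.ad F L a) = Submodule.span F {v} :=
    range_ad_eq_span_s8 a b₀ (hble a) hb₀
  have hmemv : ∀ b : L, ⁅a, b⁆ ∈ Submodule.span F {v} := fun b => by
    rw [← hrange]; exact ⟨b, by simp [LieAlgebra.ad_apply]⟩
  -- `⁅a, v⁆ = c • v` with `c ≠ 0`
  obtain ⟨c, hc⟩ := Submodule.mem_span_singleton.1 (hmemv v)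
  have hcne : c ≠ 0 := by
    rintro rfl
    apply ha
    refine ⟨2, ?_⟩
    ext b
    obtain ⟨d, hd⟩ := Submodule.mem_span_singleton.1 (hmemv b)
    simp only [Module.End.pow_apply, Function.iterate_succ, Function.iterate_zero,
      Function.comp_apply, id_eq, LieAlgebra.ad_apply, LinearMap.zero_apply]
    rw [← hd, lie_smul, ← hc, zero_smul, smul_zero]
  set x : L := v with hxdef
  set y : L := (-c⁻¹) • a with hydef
  have hx0 : x ≠ 0 := hb₀
  have hxy : ⁅x, y⁆ = x := by
    rw [hydef, lie_smul, ← lie_skew, ← hc, neg_smul, smul_neg, neg_neg, smul_smul,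
      inv_mul_cancel₀ hcne, one_smul]
  have hy0 : y ≠ 0 := by intro h; rw [h, lie_zero] at hxy; exact hx0 hxy.symm
  -- ranges of `ad x` and `ad y`
  have hrx : LinearMap.range (LieAlgebra.ad F L x) = Submodule.span F {x} := by
    have := range_ad_eq_span_s8 x y (hble x) (by rw [hxy]; exact hx0)
    rwa [hxy] at this
  have hry : LinearMap.range (LieAlgebra.ad F L y) = Submodule.span F {x} := by
    have hyx : ⁅y, x⁆ = -x := by rw [← lie_skew, hxy]
    have hne : ⁅y, x⁆ ≠ 0 := by rw [hyx]; simpa using hx0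
    have := range_ad_eq_span_s8 y x (hble y) hne
    rw [this, hyx]
    ext w
    simp only [Submodule.mem_span_singleton]
    constructor
    · rintro ⟨t, rfl⟩; exact ⟨-t, by simp⟩
    · rintro ⟨t, rfl⟩; exact ⟨-t, by simp⟩
  have hxc : ∀ b : L, ∃ s : F, ⁅x, b⁆ = s • x := fun b => by
    have : ⁅x, b⁆ ∈ Submodule.span F {x} := hrx ▸ ⟨b, by simp [LieAlgebra.ad_apply]⟩
    obtain ⟨s, hs⟩ := Submodule.mem_span_singleton.1 this
    exact ⟨s, hs.symm⟩
  have hyc : ∀ b : L, ∃ s : F, ⁅y, b⁆ = s • x := fun b => by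
    have : ⁅y, b⁆ ∈ Submodule.span F {x} := hry ▸ ⟨b, by simp [LieAlgebra.ad_apply]⟩
    obtain ⟨s, hs⟩ := Submodule.mem_span_singleton.1 this
    exact ⟨s, hs.symm⟩
  -- key: every bracket lies in `span {x}`
  have hbr : ∀ p q : L, ⁅p, q⁆ ∈ Submodule.span F {x} := by
    intro p q
    by_contra hw
    obtain ⟨s, hs⟩ := hxc p
    obtain ⟨u, hu⟩ := hyc p
    set p' : L := p + u • x - s • y with hp'
    have h1 : ⁅x, p'⁆ = 0 := by
      rw [hp', lie_sub, lie_add, lie_smul, lie_smul, lie_self, hs, hxy, smul_zero]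
      abel
    have h2 : ⁅y, p'⁆ = 0 := by
      have hyx : ⁅y, x⁆ = -x := by rw [← lie_skew, hxy]
      rw [hp', lie_sub, lie_add, lie_smul, lie_smul, lie_self, hu, hyx, smul_zero, smul_neg]
      abel
    obtain ⟨r, hr⟩ := hxc q
    obtain ⟨t, ht⟩ := hyc q
    set w' : L := ⁅p', q⁆ with hw'
    have hw'eq : w' = ⁅p, q⁆ + (u * r - s * t) • x := by
      rw [hw', hp', sub_lie, add_lie, smul_lie, smul_lie, hr, ht, smul_smul, smul_smul,
        sub_smul]
      abel
    have hw'n : w' ∉ Submodule.span F {x} := by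
      intro hmem
      apply hw
      have : ⁅p, q⁆ = w' - (u * r - s * t) • x := by rw [hw'eq]; abel
      rw [this]
      exact Submodule.sub_mem _ hmem (Submodule.smul_mem _ _ (Submodule.mem_span_singleton_self x))
    set d : L := x + p' with hd
    have hdy : ⁅d, y⁆ = x := by
      rw [hd, add_lie, hxy, ← lie_skew p' y, h2, neg_zero, add_zero]
    have hdq : ⁅d, q⁆ = r • x + w' := by rw [hd, add_lie, hr, hw']
    -- two linearly independent elements in the range of `ad d`
    have hli : LinearIndependent F ![x, r • x + w'] := by
      rw [LinearIndependent.pair_iff]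
      intro s' t' hst
      have ht' : t' = 0 := by
        by_contra ht'
        apply hw'n
        have h3 : t' • w' = -((s' + t' * r) • x) := by
          have heq : s' • x + t' • (r • x + w') = (s' + t' * r) • x + t' • w' := by
            rw [smul_add, add_smul, smul_smul]; abel
          rw [heq] at hst
          rw [eq_neg_iff_add_eq_zero, add_comm]
          exact hst
        have hw'eq2 : w' = t'⁻¹ • (t' • w') := by
          rw [smul_smul, inv_mul_cancel₀ ht', one_smul]
        rw [hw'eq2, h3]
        exact Submodule.smul_mem _ _ (Submodule.neg_mem _
          (Submodule.smul_mem _ _ (Submodule.mem_span_singleton_self x)))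
      subst ht'
      rw [zero_smul, add_zero, smul_eq_zero] at hst
      exact ⟨hst.resolve_right hx0, rfl⟩
    have h2le : 2 ≤ finrank F (LinearMap.range (LieAlgebra.ad F L d)) := by
      have hsple : Submodule.span F (Set.range ![x, r • x + w']) ≤
          LinearMap.range (LieAlgebra.ad F L d) := by
        rw [Submodule.span_le]
        rintro z ⟨i, rfl⟩
        fin_cases i
        · exact ⟨y, by simp [LieAlgebra.ad_apply, hdy]⟩
        · exact ⟨q, by simp [LieAlgebra.ad_apply, hdq]⟩
      calc 2 = finrank F (Submodule.span F (Set.range ![x, r • x + w'])) := by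
              rw [finrank_span_eq_card hli]; simp
        _ ≤ finrank F (LinearMap.range (LieAlgebra.ad F L d)) :=
              Submodule.finrank_mono hsple
    exact absurd (hble d) (by omega)
  -- centrality criterion
  have hz : ∀ z : L, ⁅x, z⁆ = 0 → ⁅y, z⁆ = 0 → ∀ b : L, ⁅z, b⁆ = 0 := by
    intro z hxz hyz b
    obtain ⟨γ, hγ⟩ := Submodule.mem_span_singleton.1 (hbr z b)
    obtain ⟨t, ht⟩ := hyc b
    have key : ⁅z, ⁅y, b⁆⁆ = ⁅⁅z, y⁆, b⁆ + ⁅y, ⁅z, b⁆⁆ := by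
      rw [leibniz_lie]
    have hl : ⁅z, ⁅y, b⁆⁆ = 0 := by
      rw [ht, lie_smul, ← lie_skew, hxz, neg_zero, smul_zero]
    have hzy : ⁅z, y⁆ = 0 := by rw [← lie_skew, hyz, neg_zero]
    have hr : ⁅y, ⁅z, b⁆⁆ = -γ • x := by
      rw [← hγ, lie_smul, ← lie_skew, hxy, smul_neg, neg_smul]
    rw [hl, hzy, zero_lie, zero_add, hr] at key
    have hγ0 : γ = 0 := by
      have := key.symm
      rw [neg_smul, neg_eq_zero, smul_eq_zero] at this
      exact this.resolve_right hx0
    rw [← hγ, hγ0, zero_smul]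
  -- the central complement
  set Z : Submodule F L := LinearMap.ker (LieAlgebra.ad F L x) ⊓ LinearMap.ker (LieAlgebra.ad F L y)
    with hZdef
  have hZmem : ∀ z : L, z ∈ Z ↔ ⁅x, z⁆ = 0 ∧ ⁅y, z⁆ = 0 := by
    intro z
    simp [hZdef, Submodule.mem_inf, LinearMap.mem_ker, LieAlgebra.ad_apply]
  have hZcentral : ∀ z ∈ Z, z ∈ LieAlgebra.center F L := by
    intro z hzZ
    rw [hZmem] at hzZ
    rw [LieModule.mem_maxTrivSubmodule]
    intro b
    rw [← lie_skew, hz z hzZ.1 hzZ.2 b, neg_zero]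
  have hlixy : LinearIndependent F ![x, y] := by
    rw [LinearIndependent.pair_iff]
    intro s t hst
    have h1 : ⁅x, s • x + t • y⁆ = t • x := by
      rw [lie_add, lie_smul, lie_smul, lie_self, smul_zero, zero_add, hxy]
    rw [hst, lie_zero] at h1
    have ht : t = 0 := by
      rcases smul_eq_zero.1 h1.symm with h | h
      · exact h
      · exact absurd h hx0
    subst ht
    rw [zero_smul, add_zero, smul_eq_zero] at hst
    exact ⟨hst.resolve_right hx0, rfl⟩
  set W : Submodule F L := Submodule.span F (Set.range ![x, y]) with hWdef
  have hrangexy : Set.range ![x, y] = {x, y} := by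
    exact Matrix.range_cons_cons_empty x y ![]
  have hWmem : ∀ w : L, w ∈ W ↔ ∃ s t : F, w = s • x + t • y := by
    intro w
    rw [hWdef, hrangexy]
    constructor
    · intro hw
      obtain ⟨s, t, hst⟩ := Submodule.mem_span_pair.1 hw
      exact ⟨s, t, hst.symm⟩
    · rintro ⟨s, t, rfl⟩
      exact Submodule.mem_span_pair.2 ⟨s, t, rfl⟩
  have hcompl : IsCompl W Z := by
    constructor
    · rw [disjoint_iff_inf_le]
      intro w hw
      obtain ⟨hwW, hwZ⟩ := Submodule.mem_inf.1 hw
      obtain ⟨s, t, rfl⟩ := (hWmem w).1 hwW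
      rw [hZmem] at hwZ
      obtain ⟨h1, h2⟩ := hwZ
      have hx1 : ⁅x, s • x + t • y⁆ = t • x := by
        rw [lie_add, lie_smul, lie_smul, lie_self, smul_zero, zero_add, hxy]
      rw [h1] at hx1
      have ht : t = 0 := (smul_eq_zero.1 hx1.symm).resolve_right hx0
      subst ht
      have hy1 : ⁅y, s • x + (0:F) • y⁆ = -(s • x) := by
        rw [lie_add, lie_smul, lie_smul, lie_self, smul_zero, add_zero, ← lie_skew, hxy,
          smul_neg]
      rw [h2] at hy1
      have hs : s = 0 := by
        have := hy1.symm
        rw [neg_eq_zero, smul_eq_zero] at this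
        exact this.resolve_right hx0
      subst hs
      simp
    · rw [codisjoint_iff_le_sup]
      intro b _
      obtain ⟨s, hs⟩ := hxc b
      obtain ⟨u, hu⟩ := hyc b
      have hbZ : b + u • x - s • y ∈ Z := by
        rw [hZmem]
        constructor
        · rw [lie_sub, lie_add, lie_smul, lie_smul, lie_self, hs, hxy, smul_zero]
          abel
        · have hyx : ⁅y, x⁆ = -x := by rw [← lie_skew, hxy]
          rw [lie_sub, lie_add, lie_smul, lie_smul, lie_self, hu, hyx, smul_zero, smul_neg]
          abel
      have hbW : s • y - u • x ∈ W := by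
        rw [hWmem]
        exact ⟨-u, s, by rw [neg_smul]; abel⟩
      have : b = (s • y - u • x) + (b + u • x - s • y) := by abel
      rw [this]
      exact Submodule.add_mem _ (Submodule.mem_sup_left hbW) (Submodule.mem_sup_right hbZ)
  -- dimensions
  have hWrank : finrank F W = 2 := by
    rw [hWdef, finrank_span_eq_card hlixy]; simp
  have hZrank : finrank F Z = n - 2 := by
    have := Submodule.finrank_add_eq_of_isCompl hcompl
    rw [hWrank, hdim] at this
    omega
  -- build the basis
  let bW : Basis (Fin 2) F W := Basis.span hlixy
  let bZ : Basis (Fin (n - 2)) F Z := (Module.finBasis F Z).reindex (finCongr hZrank)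
  let e : (Fin 2 ⊕ Fin (n - 2)) ≃ Fin n := finSumFinEquiv.trans (finCongr (by omega))
  let B : Basis (Fin n) F L :=
    ((bW.prod bZ).map (Submodule.prodEquivOfIsCompl W Z hcompl)).reindex e
  have hB : ∀ j : Fin 2 ⊕ Fin (n - 2), B (e j) =
      Submodule.prodEquivOfIsCompl W Z hcompl ((bW.prod bZ) j) := by
    intro j
    rw [Basis.reindex_apply, Equiv.symm_apply_apply, Basis.map_apply]
  have hBinl : ∀ i : Fin 2, B (e (Sum.inl i)) = (bW i : L) := by
    intro i
    rw [hB, Basis.prod_apply]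
    simp
  have hBinr : ∀ i : Fin (n - 2), B (e (Sum.inr i)) = (bZ i : L) := by
    intro i
    rw [hB, Basis.prod_apply]
    simp
  have he0 : e (Sum.inl 0) = ⟨0, by omega⟩ := by
    simp only [e, Equiv.trans_apply, finSumFinEquiv_apply_left, finCongr_apply]
    rfl
  have he1 : e (Sum.inl 1) = ⟨1, by omega⟩ := by
    simp only [e, Equiv.trans_apply, finSumFinEquiv_apply_left, finCongr_apply]
    rfl
  have hB0 : B ⟨0, by omega⟩ = x := by
    rw [← he0, hBinl]
    have := Basis.span_apply hlixy 0
    exact congrArg Subtype.val this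
  have hB1 : B ⟨1, by omega⟩ = y := by
    rw [← he1, hBinl]
    have := Basis.span_apply hlixy 1
    exact congrArg Subtype.val this
  refine ⟨B, ?_, ?_⟩
  · rw [hB0, hB1, hxy]
  · intro i hi
    obtain ⟨j, rfl⟩ := e.surjective i
    cases j with
    | inl k =>
      exfalso
      have : (e (Sum.inl k) : ℕ) = (k : ℕ) := by
        simp only [e, Equiv.trans_apply, finSumFinEquiv_apply_left, finCongr_apply]
        rfl
      rw [this] at hi
      omega
    | inr k =>
      rw [hBinr]
      exact hZcentral _ (bZ k).2
end

section
/- A finite-dimensional pure nonnilpotent solvable Lie algebra of breadth 1 over a field of characteristic ≠ 2 is 2-dimensional with a basis {x, y} satisfying [x,y] = x. -/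
open Module

theorem stmt9 (F L : Type*) [Field F] [LieRing L] [LieAlgebra F L]
    [FiniteDimensional F L] (hchar : ringChar F ≠ 2)
    [LieAlgebra.IsSolvable L] (hnn : ¬ LieRing.IsNilpotent L)
    (hpure : LieAlgebra.center F L ≤ LieAlgebra.derivedSeries F L 1)
    (hb : HasBreadth F L 1) :
    finrank F L = 2 ∧ ∃ B : Basis (Fin 2) F L, ⁅B 0, B 1⁆ = B 0 := by
  classical
  -- a rank-≤-1 submodule containing a nonzero vector v is contained in span {v}
  have aux : ∀ (S : Submodule F L), finrank F S ≤ 1 → ∀ v ∈ S, v ≠ 0 →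
      S ≤ Submodule.span F {v} := by
    intro S hS v hv h0
    have h1 : Submodule.span F {v} ≤ S := (Submodule.span_le).2 (by simpa using hv)
    have h2 : finrank F (Submodule.span F {v}) = 1 := finrank_span_singleton h0
    have := Submodule.eq_of_le_of_finrank_le h1 (by omega)
    exact this.ge
  have hbr1 : ∀ u : L, finrank F (LinearMap.range (LieAlgebra.ad F L u)) ≤ 1 := hb.1
  -- Engel: get x₀ with ad x₀ not nilpotent
  rw [LieAlgebra.isNilpotent_iff_forall (R := F)] at hnn
  push_neg at hnn
  obtain ⟨x₀, hx₀⟩ := hnn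
  have hne : LinearMap.range (LieAlgebra.ad F L x₀) ≠ ⊥ := by
    intro h
    exact hx₀ (by rw [LinearMap.range_eq_bot] at h; simp [h])
  obtain ⟨w, hwmem, hw0⟩ := Submodule.exists_mem_ne_zero_of_ne_bot hne
  have hrx₀ : LinearMap.range (LieAlgebra.ad F L x₀) ≤ Submodule.span F {w} :=
    aux _ (hbr1 x₀) w hwmem hw0
  -- ⁅x₀, w⁆ = lam • w with lam ≠ 0
  obtain ⟨lam, hlam'⟩ := (Submodule.mem_span_singleton).1
    (hrx₀ (LinearMap.mem_range_self (LieAlgebra.ad F L x₀) w))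
  have hlam : ⁅x₀, w⁆ = lam • w := hlam'.symm
  have hlam0 : lam ≠ 0 := by
    intro h
    apply hx₀
    refine ⟨2, ?_⟩
    ext y
    have hy : LieAlgebra.ad F L x₀ y ∈ Submodule.span F {w} :=
      hrx₀ (LinearMap.mem_range_self _ y)
    obtain ⟨c, hc⟩ := (Submodule.mem_span_singleton).1 hy
    have : (LieAlgebra.ad F L x₀) ((LieAlgebra.ad F L x₀) y) = 0 := by
      rw [hc.symm, map_smul, show (LieAlgebra.ad F L x₀) w = lam • w from hlam, h]
      simp
    simpa [pow_succ, Module.End.mul_apply] using this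
  -- rescale
  set x : L := lam⁻¹ • x₀ with hxdef
  have hxw : ⁅x, w⁆ = w := by
    rw [hxdef, smul_lie, show ⁅x₀, w⁆ = lam • w from hlam, smul_smul,
      inv_mul_cancel₀ hlam0, one_smul]
  have hxspan : ∀ z : L, ⁅x, z⁆ ∈ Submodule.span F {w} := by
    intro z
    rw [hxdef, smul_lie]
    exact Submodule.smul_mem _ _ (hrx₀ (LinearMap.mem_range_self _ z))
  have hwspan : ∀ z : L, ⁅w, z⁆ ∈ Submodule.span F {w} := by
    have hmem : -w ∈ LinearMap.range (LieAlgebra.ad F L w) :=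
      ⟨x, by simp [LieAlgebra.ad_apply, ← lie_skew w x, hxw]⟩
    have hle := aux _ (hbr1 w) (-w) hmem (by simpa using hw0)
    intro z
    have := hle (LinearMap.mem_range_self (LieAlgebra.ad F L w) z)
    rwa [show ({-w} : Set L) = {(-1 : F) • w} by norm_num,
      Submodule.span_singleton_smul_eq (by simp : IsUnit (-1 : F)) w] at this
  -- decomposition: every z is a•w + c with ⁅x,c⁆ = 0
  have hdec0 : ∀ z : L, ∃ a : F, ⁅x, z - a • w⁆ = 0 := by
    intro z
    obtain ⟨a, ha⟩ := (Submodule.mem_span_singleton).1 (hxspan z)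
    exact ⟨a, by rw [lie_sub, lie_smul, hxw, ha, sub_self]⟩
  -- any c with ⁅x,c⁆ = 0 is b•x + central
  have hcent : ∀ c : L, ⁅x, c⁆ = 0 → ∃ b : F, ∀ v : L, ⁅c - b • x, v⁆ = 0 := by
    intro c hc
    obtain ⟨t, ht⟩ := (Submodule.mem_span_singleton).1 (hwspan c)
    refine ⟨-t, fun v => ?_⟩
    set k : L := c - (-t) • x with hkdef
    have hkw : ⁅k, w⁆ = 0 := by
      rw [hkdef, sub_lie, smul_lie, hxw, ← lie_skew, ← ht]
      module
    have hxk : ⁅x, k⁆ = 0 := by rw [hkdef, lie_sub, hc, lie_smul, lie_self]; simp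
    have hkx : ⁅k, x⁆ = 0 := by rw [← lie_skew, hxk, neg_zero]
    obtain ⟨a, ha⟩ := hdec0 v
    set cv : L := v - a • w with hcvdef
    have hkv : ⁅k, v⁆ = ⁅k, cv⁆ := by
      rw [hcvdef, lie_sub, lie_smul, hkw, smul_zero, sub_zero]
    -- range of ad(x+k) is in span {w}
    have hxk_w : ⁅x + k, w⁆ = w := by rw [add_lie, hxw, hkw, add_zero]
    have hxkspan : LinearMap.range (LieAlgebra.ad F L (x + k)) ≤ Submodule.span F {w} :=
      aux _ (hbr1 (x + k)) w ⟨w, by simpa [LieAlgebra.ad_apply] using hxk_w⟩ hw0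
    have hmem : ⁅k, cv⁆ ∈ Submodule.span F {w} := by
      have h1 : ⁅x + k, cv⁆ ∈ Submodule.span F {w} :=
        hxkspan (LinearMap.mem_range_self _ cv)
      have h2 : ⁅k, cv⁆ = ⁅x + k, cv⁆ - ⁅x, cv⁆ := by rw [add_lie]; abel
      rw [h2, ha, sub_zero]
      exact h1
    obtain ⟨s, hs⟩ := (Submodule.mem_span_singleton).1 hmem
    have hjac : ⁅x, ⁅k, cv⁆⁆ = 0 := by
      rw [leibniz_lie, hxk, ha, zero_lie, lie_zero, add_zero]
    rw [← hs, lie_smul, hxw] at hjac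
    have hs0 : s = 0 := by
      rcases smul_eq_zero.1 hjac with h | h
      · exact h
      · exact absurd h hw0
    rw [hkv, ← hs, hs0, zero_smul]
  -- full decomposition
  have hdec : ∀ z : L, ∃ a b : F, ∃ k : L, z = a • w + b • x + k ∧ ∀ v : L, ⁅k, v⁆ = 0 := by
    intro z
    obtain ⟨a, ha⟩ := hdec0 z
    obtain ⟨b, hk⟩ := hcent _ ha
    exact ⟨a, b, z - a • w - b • x, by module, hk⟩
  -- all brackets lie in span {w}
  have hbrkt : ∀ u v : L, ⁅u, v⁆ ∈ Submodule.span F {w} := by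
    intro u v
    obtain ⟨a, b, k, hv, hk⟩ := hdec v
    have huk : ⁅u, k⁆ = 0 := by rw [← lie_skew, hk u, neg_zero]
    have huw : ⁅u, w⁆ ∈ Submodule.span F {w} := by
      rw [← neg_neg ⁅u, w⁆, lie_skew]
      exact Submodule.neg_mem _ (hwspan u)
    have hux : ⁅u, x⁆ ∈ Submodule.span F {w} := by
      rw [← neg_neg ⁅u, x⁆, lie_skew]
      exact Submodule.neg_mem _ (hxspan u)
    rw [hv, lie_add, lie_add, lie_smul, lie_smul, huk, add_zero]
    exact Submodule.add_mem _ (Submodule.smul_mem _ _ huw) (Submodule.smul_mem _ _ hux)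
  -- central elements are zero
  have hcen0 : ∀ k : L, (∀ v : L, ⁅k, v⁆ = 0) → k = 0 := by
    intro k hk
    have hkc : k ∈ LieAlgebra.center F L := by
      rw [LieModule.mem_maxTrivSubmodule]
      intro v
      rw [← lie_skew, hk v, neg_zero]
    have hder : LieAlgebra.derivedSeries F L 1 ≤
        ({ toSubmodule := Submodule.span F {w},
           lie_mem := fun {u m} _ => hbrkt u m } : LieIdeal F L) := by
      rw [LieAlgebra.derivedSeries_def, LieAlgebra.derivedSeriesOfIdeal_succ,
        LieAlgebra.derivedSeriesOfIdeal_zero]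
      rw [LieSubmodule.lie_le_iff]
      intro a _ m _
      exact hbrkt a m
    have hkw : k ∈ Submodule.span F {w} := hder (hpure hkc)
    obtain ⟨s, hs⟩ := (Submodule.mem_span_singleton).1 hkw
    have hxk : ⁅x, k⁆ = 0 := by rw [← lie_skew, hk x, neg_zero]
    rw [← hs, lie_smul, hxw] at hxk
    rcases smul_eq_zero.1 hxk with h | h
    · rw [← hs, h, zero_smul]
    · exact absurd h hw0
  have hx0 : x ≠ 0 := by
    intro h
    rw [h, zero_lie] at hxw
    exact hw0 hxw.symm
  -- span {w, -x} = ⊤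
  have htop : Submodule.span F ({w, -x} : Set L) = ⊤ := by
    rw [eq_top_iff]
    intro z _
    obtain ⟨a, b, k, hz, hk⟩ := hdec z
    rw [hcen0 k hk, add_zero] at hz
    rw [hz]
    have hw' : w ∈ Submodule.span F ({w, -x} : Set L) :=
      Submodule.subset_span (by simp)
    have hx' : x ∈ Submodule.span F ({w, -x} : Set L) := by
      have h : -x ∈ Submodule.span F ({w, -x} : Set L) := Submodule.subset_span (by simp)
      simpa using Submodule.neg_mem _ h
    exact Submodule.add_mem _ (Submodule.smul_mem _ _ hw') (Submodule.smul_mem _ _ hx')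
  have hli : LinearIndependent F ![w, -x] := by
    rw [LinearIndependent.pair_iff]
    intro s t hst
    have h1 : ⁅x, s • w + t • -x⁆ = s • w := by
      rw [lie_add, lie_smul, lie_smul, hxw, lie_neg, lie_self, neg_zero, smul_zero, add_zero]
    rw [hst, lie_zero] at h1
    have hs0 : s = 0 := by
      rcases smul_eq_zero.1 h1.symm with h | h
      · exact h
      · exact absurd h hw0
    constructor
    · exact hs0
    · rw [hs0, zero_smul, zero_add] at hst
      rcases smul_eq_zero.1 hst with h | h
      · exact h
      · exact absurd (neg_eq_zero.1 h) hx0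
  have hrange : Set.range ![w, -x] = ({w, -x} : Set L) := by
    ext z
    simp only [Set.mem_range, Fin.exists_fin_two, Matrix.cons_val_zero, Matrix.cons_val_one,
      Matrix.head_cons, Set.mem_insert_iff, Set.mem_singleton_iff]
    constructor
    · rintro (h | h)
      · exact Or.inl h.symm
      · exact Or.inr h.symm
    · rintro (h | h)
      · exact Or.inl h.symm
      · exact Or.inr h.symm
  have hsp : Submodule.span F (Set.range ![w, -x]) = ⊤ := by rw [hrange, htop]
  let B : Basis (Fin 2) F L := Basis.mk hli hsp.ge
  have hB0 : B 0 = w := by simp [B]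
  have hB1 : B 1 = -x := by simp [B]
  refine ⟨?_, B, ?_⟩
  · rw [finrank_eq_card_basis B, Fintype.card_fin]
  · rw [hB0, hB1, lie_neg, lie_skew, hxw]
end

section
/- Let L be a finite-dimensional Lie algebra of breadth 2 over a field of characteristic ≠ 2, and let A be an abelian ideal of L with b_A(L) = 2. Then dim [A,L] = 2. -/
open Module

/-!
Pick `x` with `dim [A, x] = 2` and put `W = [A, x]`. Since `b(L) = 2` and `W ⊆ [L, x]`, the
whole image `[L, x]` is `W`. As `A` is abelian, `ad (x + a)` agrees with `ad x` on `A` for every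
`a ∈ A`, so the same argument gives `[L, x + a] = W`; subtracting, `[a, y] ∈ W` for all `y ∈ L`.
Hence `[A, L] = W`.
-/

theorem LinearMap.range_domRestrict_eq_range_of_finrank_le {K V V₂ : Type*} [Field K]
    [AddCommGroup V] [Module K V] [AddCommGroup V₂] [Module K V₂] [FiniteDimensional K V]
    (f : V →ₗ[K] V₂) (p : Submodule K V)
    (h : finrank K (range f) ≤ finrank K (range (f.domRestrict p))) :
    range (f.domRestrict p) = range f :=
  Submodule.eq_of_le_of_finrank_le (f.range_domRestrict_le_range p) h

namespace LieIdeal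

variable {F L : Type*} [Field F] [LieRing L] [LieAlgebra F L] {A : LieIdeal F L}

theorem lie_eq_zero_of_mem_of_mem [IsLieAbelian A] {a b : L} (ha : a ∈ A) (hb : b ∈ A) :
    ⁅a, b⁆ = 0 :=
  congrArg Subtype.val (trivial_lie_zero A A ⟨a, ha⟩ ⟨b, hb⟩)

theorem ad_add_domRestrict_of_mem [IsLieAbelian A] (x : L) {a : L} (ha : a ∈ A) :
    (LieAlgebra.ad F L (x + a)).domRestrict A.toSubmodule =
      (LieAlgebra.ad F L x).domRestrict A.toSubmodule := by
  ext b
  simp only [LinearMap.domRestrict_apply, LieAlgebra.ad_apply, add_lie,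
    lie_eq_zero_of_mem_of_mem ha b.2, add_zero]

variable [FiniteDimensional F L] {x : L}
  (hbound : ∀ z : L, finrank F (LinearMap.range (LieAlgebra.ad F L z)) ≤
    finrank F (LinearMap.range ((LieAlgebra.ad F L x).domRestrict A.toSubmodule)))
include hbound

theorem range_ad_add_eq_of_mem [IsLieAbelian A] {a : L} (ha : a ∈ A) :
    LinearMap.range (LieAlgebra.ad F L (x + a)) =
      LinearMap.range ((LieAlgebra.ad F L x).domRestrict A.toSubmodule) := by
  rw [← ad_add_domRestrict_of_mem x ha]
  refine (LinearMap.range_domRestrict_eq_range_of_finrank_le _ _ ?_).symm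
  rw [ad_add_domRestrict_of_mem x ha]
  exact hbound (x + a)

theorem lie_mem_range_ad_domRestrict [IsLieAbelian A] {a : L} (ha : a ∈ A) (y : L) :
    ⁅a, y⁆ ∈ LinearMap.range ((LieAlgebra.ad F L x).domRestrict A.toSubmodule) := by
  have hxa : ⁅x + a, y⁆ ∈ LinearMap.range ((LieAlgebra.ad F L x).domRestrict A.toSubmodule) :=
    range_ad_add_eq_of_mem hbound ha ▸ ⟨y, rfl⟩
  have hx : ⁅x, y⁆ ∈ LinearMap.range ((LieAlgebra.ad F L x).domRestrict A.toSubmodule) := by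
    have hrange := range_ad_add_eq_of_mem hbound A.zero_mem
    rw [add_zero] at hrange
    exact hrange ▸ ⟨y, rfl⟩
  simpa [add_lie] using Submodule.sub_mem _ hxa hx

theorem toSubmodule_lie_top_eq_range_ad_domRestrict [IsLieAbelian A] :
    (⁅A, (⊤ : LieIdeal F L)⁆ : LieIdeal F L).toSubmodule =
      LinearMap.range ((LieAlgebra.ad F L x).domRestrict A.toSubmodule) := by
  apply le_antisymm
  · rw [LieSubmodule.lieIdeal_oper_eq_linear_span, Submodule.span_le]
    rintro _ ⟨a, y, rfl⟩
    exact lie_mem_range_ad_domRestrict hbound a.2 y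
  · rintro _ ⟨b, rfl⟩
    rw [LinearMap.domRestrict_apply, LieAlgebra.ad_apply, ← lie_skew]
    exact Submodule.neg_mem _ (LieSubmodule.lie_mem_lie b.2 (LieSubmodule.mem_top x))

end LieIdeal

theorem stmt10_general (F L : Type*) [Field F] [LieRing L] [LieAlgebra F L]
    [FiniteDimensional F L]
    (hb : HasBreadth F L 2) (A : LieIdeal F L) (hA : IsLieAbelian A)
    (hbA : (∀ x : L,
        finrank F (LinearMap.range ((LieAlgebra.ad F L x).domRestrict A.toSubmodule)) ≤ 2) ∧
      ∃ x : L,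
        finrank F (LinearMap.range ((LieAlgebra.ad F L x).domRestrict A.toSubmodule)) = 2) :
    finrank F (⁅A, (⊤ : LieIdeal F L)⁆ : LieIdeal F L) = 2 := by
  obtain ⟨x, hx⟩ := hbA.2
  have hbound : ∀ z : L, finrank F (LinearMap.range (LieAlgebra.ad F L z)) ≤
      finrank F (LinearMap.range ((LieAlgebra.ad F L x).domRestrict A.toSubmodule)) :=
    fun z ↦ hx ▸ hb.1 z
  rw [← hx, ← LieIdeal.toSubmodule_lie_top_eq_range_ad_domRestrict hbound]
  rfl

theorem stmt10 (F L : Type*) [Field F] [LieRing L] [LieAlgebra F L]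
    [FiniteDimensional F L] (hchar : ringChar F ≠ 2)
    (hb : HasBreadth F L 2) (A : LieIdeal F L) (hA : IsLieAbelian A)
    (hbA : (∀ x : L,
        finrank F (LinearMap.range ((LieAlgebra.ad F L x).domRestrict A.toSubmodule)) ≤ 2) ∧
      ∃ x : L,
        finrank F (LinearMap.range ((LieAlgebra.ad F L x).domRestrict A.toSubmodule)) = 2) :
    finrank F (⁅A, (⊤ : LieIdeal F L)⁆ : LieIdeal F L) = 2 :=
  stmt10_general F L hb A hA hbA
end

section
/- Let L be a pure nonnilpotent solvable Lie algebra over ℂ of breadth 2 with dim [L,L] = 2 and dim L^k = 1 for all k ≥ 2 (lower central series). Then dim Z(L) = 1. -/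
open Module

theorem stmt14 (L : Type*) [LieRing L] [LieAlgebra ℂ L] [FiniteDimensional ℂ L]
    [LieAlgebra.IsSolvable L] (hnn : ¬ LieRing.IsNilpotent L)
    (hpure : LieAlgebra.center ℂ L ≤ LieAlgebra.derivedSeries ℂ L 1)
    (hb : HasBreadth ℂ L 2)
    (hder : finrank ℂ (LieAlgebra.derivedSeries ℂ L 1) = 2)
    (hlcs : ∀ k : ℕ, 2 ≤ k → finrank ℂ (LieModule.lowerCentralSeries ℂ L L k) = 1) :
    finrank ℂ (LieAlgebra.center ℂ L) = 1 := by
  classical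
  set L1 : Submodule ℂ L := (LieModule.lowerCentralSeries ℂ L L 1 : LieSubmodule ℂ L L).toSubmodule with hL1
  set L2 : Submodule ℂ L := (LieModule.lowerCentralSeries ℂ L L 2 : LieSubmodule ℂ L L).toSubmodule with hL2
  set L3 : Submodule ℂ L := (LieModule.lowerCentralSeries ℂ L L 3 : LieSubmodule ℂ L L).toSubmodule with hL3
  have hds : LieAlgebra.derivedSeries ℂ L 1 = LieModule.lowerCentralSeries ℂ L L 1 := by
    rw [LieAlgebra.derivedSeries_def, LieAlgebra.derivedSeriesOfIdeal_succ,
      LieAlgebra.derivedSeriesOfIdeal_zero, LieModule.lowerCentralSeries_succ,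
      LieModule.lowerCentralSeries_zero]
  have h1 : finrank ℂ L1 = 2 := by rw [← hder, hds]; rfl
  have h2 : finrank ℂ L2 = 1 := hlcs 2 le_rfl
  have h3 : finrank ℂ L3 = 1 := hlcs 3 (by norm_num)
  have h32le : L3 ≤ L2 :=
    (LieSubmodule.toSubmodule_le_toSubmodule _ _).mpr
      (LieModule.antitone_lowerCentralSeries ℂ L L (by norm_num))
  have h32 : L3 = L2 := Submodule.eq_of_le_of_finrank_eq h32le (by rw [h2, h3])
  -- choose z
  have hL2ne : L2 ≠ ⊥ := by
    intro h
    rw [h, finrank_bot] at h2; exact absurd h2 (by norm_num)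
  obtain ⟨z, hzL2, hzne⟩ := Submodule.exists_mem_ne_zero_of_ne_bot hL2ne
  have hspanz : (ℂ ∙ z) = L2 :=
    Submodule.eq_of_le_of_finrank_eq ((Submodule.span_singleton_le_iff_mem z L2).mpr hzL2)
      (by rw [h2, finrank_span_singleton hzne])
  -- the functional a
  have ha : ∀ u : L, ∃ c : ℂ, ⁅u, z⁆ = c • z := by
    intro u
    have : ⁅u, z⁆ ∈ L3 := by
      rw [hL3, LieModule.lowerCentralSeries_succ]
      exact LieSubmodule.lie_mem_lie (LieSubmodule.mem_top u) hzL2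
    rw [h32, ← hspanz, Submodule.mem_span_singleton] at this
    obtain ⟨c, hc⟩ := this
    exact ⟨c, hc.symm⟩
  choose a hA using ha
  have haz : a z = 0 := by
    have := hA z; rw [lie_self] at this
    exact (smul_eq_zero_iff_left hzne).mp this.symm
  -- choose x with a x ≠ 0
  have hax : ∃ u : L, a u ≠ 0 := by
    by_contra h
    push_neg at h
    have hz3 : z ∈ L3 := by rw [h32]; exact hzL2
    have hbot : L3 ≤ ⊥ := by
      rw [hL3, LieModule.lowerCentralSeries_succ, LieSubmodule.lieIdeal_oper_eq_linear_span']
      apply Submodule.span_le.mpr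
      rintro m ⟨x, -, n, hn, rfl⟩
      have hn' : n ∈ L2 := hn
      rw [← hspanz, Submodule.mem_span_singleton] at hn'
      obtain ⟨c, rfl⟩ := hn'
      simp only [SetLike.mem_coe, lie_smul, hA, h x, zero_smul, smul_zero]
      exact Submodule.zero_mem _
    exact hzne (Submodule.mem_bot ℂ |>.mp (hbot hz3))
  obtain ⟨u0, hu0⟩ := hax
  set x : L := (a u0)⁻¹ • u0 with hxdef
  have hxz : ⁅x, z⁆ = z := by
    rw [hxdef, smul_lie, hA, smul_smul, inv_mul_cancel₀ hu0, one_smul]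
  have hax1 : a x = 1 := by
    have h1' := hA x
    rw [hxz] at h1'
    have : (a x - 1) • z = 0 := by rw [sub_smul, one_smul, ← h1', sub_self]
    exact sub_eq_zero.mp ((smul_eq_zero_iff_left hzne).mp this)
  -- choose w
  have hzL1 : z ∈ L1 :=
    (LieSubmodule.toSubmodule_le_toSubmodule _ _).mpr
      (LieModule.antitone_lowerCentralSeries ℂ L L (by norm_num : (1:ℕ) ≤ 2)) hzL2
  have hspanz_le : (ℂ ∙ z) ≤ L1 := (Submodule.span_singleton_le_iff_mem z L1).mpr hzL1
  have hne : (ℂ ∙ z) ≠ L1 := by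
    intro h
    rw [← h, finrank_span_singleton hzne] at h1
    norm_num at h1
  obtain ⟨w, hwL1, hwz⟩ := SetLike.exists_of_lt (lt_of_le_of_ne hspanz_le hne)
  set P : Submodule ℂ L := Submodule.span ℂ {z, w} with hP
  have hwP : w ∈ P := Submodule.subset_span (by simp)
  have hPle : P ≤ L1 :=
    Submodule.span_le.mpr (Set.insert_subset_iff.mpr ⟨hzL1, Set.singleton_subset_iff.mpr hwL1⟩)
  have hPlt : (ℂ ∙ z) < P :=
    lt_of_le_of_ne (Submodule.span_mono (Set.singleton_subset_iff.mpr (by simp)))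
      (by intro h; rw [← h] at hwP; exact hwz hwP)
  have hPfr : finrank ℂ P = 2 := by
    have hlt := Submodule.finrank_lt_finrank_of_lt hPlt
    rw [finrank_span_singleton hzne] at hlt
    have hle := Submodule.finrank_mono hPle
    omega
  have hPL1 : P = L1 := Submodule.eq_of_le_of_finrank_eq hPle (by rw [hPfr, h1])
  -- the functional b
  have hbex : ∀ u : L, ∃ c : ℂ, ⁅u, w⁆ = c • z := by
    intro u
    have hm : ⁅u, w⁆ ∈ L2 := by
      rw [hL2, LieModule.lowerCentralSeries_succ]
      exact LieSubmodule.lie_mem_lie (LieSubmodule.mem_top u) hwL1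
    rw [← hspanz, Submodule.mem_span_singleton] at hm
    obtain ⟨c, hc⟩ := hm
    exact ⟨c, hc.symm⟩
  choose b hB using hbex
  -- a bracket outside span z exists
  have hcex : ∃ u v : L, ⁅u, v⁆ ∉ (ℂ ∙ z) := by
    by_contra h
    push_neg at h
    have hle : L1 ≤ ℂ ∙ z := by
      rw [hL1, LieModule.lowerCentralSeries_succ, LieSubmodule.lieIdeal_oper_eq_linear_span']
      apply Submodule.span_le.mpr
      rintro m ⟨p, -, q, -, rfl⟩
      exact h p q
    have := Submodule.finrank_mono hle
    rw [h1, finrank_span_singleton hzne] at this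
    omega
  obtain ⟨u, v, huv⟩ := hcex
  have huvP : ⁅u, v⁆ ∈ P := by
    rw [hPL1]
    show ⁅u, v⁆ ∈ (LieModule.lowerCentralSeries ℂ L L 1 : LieSubmodule ℂ L L)
    rw [LieModule.lowerCentralSeries_succ]
    exact LieSubmodule.lie_mem_lie (LieSubmodule.mem_top u) (LieSubmodule.mem_top v)
  obtain ⟨d, c, hdc⟩ := Submodule.mem_span_pair.mp huvP
  have hcne : c ≠ 0 := by
    rintro rfl
    apply huv
    rw [← hdc, zero_smul, add_zero]
    exact Submodule.smul_mem _ d (Submodule.mem_span_singleton_self z)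
  -- ⁅z, w⁆ = 0
  have hzu : ⁅z, u⁆ = -(a u • z) := by rw [← lie_skew, hA u]
  have hzv : ⁅z, v⁆ = -(a v • z) := by rw [← lie_skew, hA v]
  have e1 : ⁅z, ⁅u, v⁆⁆ = (c * b z) • z := by
    rw [← hdc, lie_add, lie_smul, lie_smul, lie_self, smul_zero, zero_add, hB z, smul_smul]
  have e2 : ⁅⁅z, u⁆, v⁆ = (a u * a v) • z := by
    rw [hzu, neg_lie, smul_lie, hzv]
    rw [smul_neg, neg_neg, smul_smul]
  have e3 : ⁅u, ⁅z, v⁆⁆ = -((a v * a u) • z) := by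
    rw [hzv, lie_neg, lie_smul, hA u, smul_smul]
  have e0 : (c * b z) • z = 0 := by
    have jac := leibniz_lie z u v
    rw [e1, e2, e3] at jac
    rw [jac, mul_comm (a v) (a u), add_neg_cancel]
  have hbz : b z = 0 :=
    (mul_eq_zero.mp ((smul_eq_zero_iff_left hzne).mp e0)).resolve_left hcne
  have hzw : ⁅z, w⁆ = 0 := by rw [hB z, hbz, zero_smul]
  -- the key symmetry
  have key : ∀ p q : L, b q * a p = b p * a q := by
    intro p q
    have hpqP : ⁅p, q⁆ ∈ P := by
      rw [hPL1]
      show ⁅p, q⁆ ∈ (LieModule.lowerCentralSeries ℂ L L 1 : LieSubmodule ℂ L L)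
      rw [LieModule.lowerCentralSeries_succ]
      exact LieSubmodule.lie_mem_lie (LieSubmodule.mem_top p) (LieSubmodule.mem_top q)
    obtain ⟨d', c', hdc'⟩ := Submodule.mem_span_pair.mp hpqP
    have f1 : ⁅p, ⁅q, w⁆⁆ = (b q * a p) • z := by
      rw [hB q, lie_smul, hA p, smul_smul]
    have f2 : ⁅⁅p, q⁆, w⁆ = 0 := by
      rw [← hdc', add_lie, smul_lie, smul_lie, hzw, lie_self, smul_zero, smul_zero, add_zero]
    have f3 : ⁅q, ⁅p, w⁆⁆ = (b p * a q) • z := by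
      rw [hB p, lie_smul, hA q, smul_smul]
    have jac := leibniz_lie p q w
    rw [f1, f2, f3, zero_add] at jac
    have h0 : (b q * a p - b p * a q) • z = 0 := by rw [sub_smul, jac, sub_self]
    exact sub_eq_zero.mp ((smul_eq_zero_iff_left hzne).mp h0)
  -- the central element
  set y : L := w - b x • z with hy
  have hyc : y ∈ LieAlgebra.center ℂ L := by
    apply (LieModule.mem_maxTrivSubmodule ℂ L L y).mpr
    intro u
    have hbu : b u = b x * a u := by
      have hk := key u x
      rw [hax1, mul_one] at hk
      exact hk.symm
    rw [hy, lie_sub, lie_smul, hA u, hB u, smul_smul, hbu, sub_self]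
  have hyne : y ≠ 0 := by
    intro h0
    apply hwz
    rw [hy, sub_eq_zero] at h0
    rw [h0]
    exact Submodule.smul_mem _ _ (Submodule.mem_span_singleton_self z)
  -- conclude
  set Z : Submodule ℂ L := (LieAlgebra.center ℂ L : LieSubmodule ℂ L L).toSubmodule with hZ
  have hyZ : (ℂ ∙ y) ≤ Z := (Submodule.span_singleton_le_iff_mem y Z).mpr hyc
  have hge : 1 ≤ finrank ℂ Z := by
    have := Submodule.finrank_mono hyZ
    rwa [finrank_span_singleton hyne] at this
  have hZle : Z ≤ L1 :=
    le_trans ((LieSubmodule.toSubmodule_le_toSubmodule _ _).mpr hpure) (le_of_eq (by rw [hds]))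
  have hzZ : z ∉ Z := by
    intro hzZ
    have h0 : ⁅x, z⁆ = 0 := (LieModule.mem_maxTrivSubmodule ℂ L L z).mp hzZ x
    rw [hxz] at h0
    exact hzne h0
  have hZlt : Z < L1 := lt_of_le_of_ne hZle (by intro h; exact hzZ (h ▸ hzL1))
  have hfin := Submodule.finrank_lt_finrank_of_lt hZlt
  rw [h1] at hfin
  show finrank ℂ Z = 1
  omega
end

section
/- Let L be a pure nonnilpotent solvable Lie algebra over ℂ of breadth 2 with dim [L,L] = 2 and dim L^k = 2 for all k ≥ 2. Then Z(L) = {0} and the centralizer C_L([L,L]) is an abelian ideal of L. -/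
open Module

private lemma aux_pair {M : Type*} [AddCommGroup M] [Module ℂ M] [FiniteDimensional ℂ M]
    (hfr : finrank ℂ M = 2) {e f : M} (he : e ≠ 0) (hf : f ∉ Submodule.span ℂ {e}) :
    (∀ m : M, ∃ s t : ℂ, m = s • e + t • f) ∧
      (∀ s t : ℂ, s • e + t • f = 0 → s = 0 ∧ t = 0) := by
  have huniq : ∀ s t : ℂ, s • e + t • f = 0 → s = 0 ∧ t = 0 := by
    intro s t h
    rcases eq_or_ne t 0 with rfl | ht
    · rw [zero_smul, add_zero] at h
      rcases smul_eq_zero.mp h with h | h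
      · exact ⟨h, rfl⟩
      · exact absurd h he
    · exfalso
      apply hf
      have h2 : t • f = -(s • e) := by
        rw [eq_neg_iff_add_eq_zero, add_comm]; exact h
      have h3 : f = (-(t⁻¹ * s)) • e := by
        calc f = t⁻¹ • (t • f) := by rw [smul_smul, inv_mul_cancel₀ ht, one_smul]
        _ = t⁻¹ • (-(s • e)) := by rw [h2]
        _ = (-(t⁻¹ * s)) • e := by rw [smul_neg, smul_smul, neg_smul]
      exact Submodule.mem_span_singleton.mpr ⟨_, h3.symm⟩
  have hli : LinearIndependent ℂ ![e, f] := LinearIndependent.pair_iff.mpr huniq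
  have hcard : Fintype.card (Fin 2) = finrank ℂ M := by simp [hfr]
  set b := basisOfLinearIndependentOfCardEqFinrank hli hcard with hbdef
  have hb : ⇑b = ![e, f] := coe_basisOfLinearIndependentOfCardEqFinrank hli hcard
  refine ⟨fun m => ⟨b.repr m 0, b.repr m 1, ?_⟩, huniq⟩
  have hs := b.sum_repr m
  rw [Fin.sum_univ_two, hb] at hs
  simpa [Matrix.cons_val_zero, Matrix.cons_val_one, Matrix.head_cons] using hs.symm

theorem stmt15 (L : Type*) [LieRing L] [LieAlgebra ℂ L] [FiniteDimensional ℂ L]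
    [LieAlgebra.IsSolvable L] (hnn : ¬ LieRing.IsNilpotent L)
    (hpure : LieAlgebra.center ℂ L ≤ LieAlgebra.derivedSeries ℂ L 1)
    (hb : HasBreadth ℂ L 2)
    (hder : finrank ℂ (LieAlgebra.derivedSeries ℂ L 1) = 2)
    (hlcs : ∀ k : ℕ, 2 ≤ k → finrank ℂ (LieModule.lowerCentralSeries ℂ L L k) = 2) :
    LieAlgebra.center ℂ L = ⊥ ∧
      ∃ C : LieIdeal ℂ L,
        (∀ x : L, x ∈ C ↔ ∀ y ∈ LieAlgebra.derivedSeries ℂ L 1, ⁅x, y⁆ = 0) ∧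
        IsLieAbelian C := by
  set D : LieIdeal ℂ L := LieAlgebra.derivedSeries ℂ L 1 with hDdef
  have h2eq : LieAlgebra.derivedSeries ℂ L 2 = ⁅D, D⁆ := by
    rw [hDdef, LieAlgebra.derivedSeries_def, LieAlgebra.derivedSeries_def,
      LieAlgebra.derivedSeriesOfIdeal_succ]
  have hmem : ∀ u v : L, ⁅u, v⁆ ∈ D := by
    intro u v
    have hDtop : D = ⁅(⊤ : LieIdeal ℂ L), (⊤ : LieIdeal ℂ L)⁆ := by
      rw [hDdef, LieAlgebra.derivedSeries_def, LieAlgebra.derivedSeriesOfIdeal_succ,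
        LieAlgebra.derivedSeriesOfIdeal_zero]
    rw [hDtop]
    exact LieSubmodule.lie_mem_lie (LieSubmodule.mem_top u) (LieSubmodule.mem_top v)
  have hlcs1 : LieModule.lowerCentralSeries ℂ L L 1 = D := rfl
  have hfr : finrank ℂ (↥D) = 2 := hder
  have h21 : LieModule.lowerCentralSeries ℂ L L 2 = LieModule.lowerCentralSeries ℂ L L 1 := by
    rw [← LieSubmodule.toSubmodule_inj]
    apply Submodule.eq_of_le_of_finrank_le
    · exact LieModule.antitone_lowerCentralSeries ℂ L L (by norm_num)
    · have h2 : finrank ℂ (LieModule.lowerCentralSeries ℂ L L 2) = 2 := hlcs 2 le_rfl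
      have h1 : finrank ℂ (LieModule.lowerCentralSeries ℂ L L 1) = 2 := by
        rw [hlcs1]; exact hfr
      exact le_of_eq (h1.trans h2.symm)
  have hsur : ∀ U : Submodule ℂ L, (∀ (x : L), ∀ n ∈ D, ⁅x, n⁆ ∈ U) →
      LieSubmodule.toSubmodule (D : LieSubmodule ℂ L L) ≤ U := by
    intro U hU
    have e2 : (D : LieSubmodule ℂ L L) = LieModule.lowerCentralSeries ℂ L L 2 :=
      (h21.trans hlcs1).symm
    rw [e2, LieModule.lowerCentralSeries_succ, hlcs1,
      LieSubmodule.lieIdeal_oper_eq_linear_span', Submodule.span_le]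
    rintro _ ⟨x, -, n, hn, rfl⟩
    exact hU x n hn
  have hspanM : ∀ U : Submodule ℂ (↥D), (∀ (x : L) (d : ↥D), ⁅x, d⁆ ∈ U) → U = ⊤ := by
    intro U hU
    rw [eq_top_iff]
    intro m _
    have h1 : (m : L) ∈ Submodule.map (LieSubmodule.toSubmodule
        (D : LieSubmodule ℂ L L)).subtype U := by
      apply hsur
      · intro x n hn
        refine ⟨(⁅x, (⟨n, hn⟩ : ↥D)⁆ : ↥D), hU x _, ?_⟩
        exact LieSubmodule.coe_bracket (D : LieSubmodule ℂ L L) x ⟨n, hn⟩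
      · exact m.2
    rcases h1 with ⟨u, hu, hum⟩
    have huu : u = m := Subtype.ext hum
    rwa [huu] at hu
  have hnt : Nontrivial (↥D) := by
    apply Module.nontrivial_of_finrank_pos (R := ℂ)
    rw [hfr]; norm_num
  -- existence of a common eigenvector
  have hev : ∃ e : ↥D, e ≠ 0 ∧ ∃ χ : L → ℂ, ∀ x : L, ⁅x, e⁆ = χ x • e := by
    rcases eq_or_ne (LieAlgebra.derivedSeries ℂ L 2) ⊥ with hD2 | hD2
    · -- D is abelian; use commuting operators
      have habel : ∀ u v : L, u ∈ D → v ∈ D → ⁅u, v⁆ = (0 : L) := by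
        intro u v hu hv
        have h1 : ⁅u, v⁆ ∈ LieAlgebra.derivedSeries ℂ L 2 := by
          rw [h2eq]; exact LieSubmodule.lie_mem_lie hu hv
        rw [hD2] at h1
        simpa using h1
      have hcomm : ∀ (x y : L) (m : ↥D), ⁅x, ⁅y, m⁆⁆ = ⁅y, ⁅x, m⁆⁆ := by
        intro x y m
        have h0 : ⁅⁅x, y⁆, m⁆ = (0 : ↥D) := by
          apply Subtype.ext
          rw [LieSubmodule.coe_bracket, LieSubmodule.coe_zero]
          exact habel _ _ (hmem x y) m.2
        have hl := lie_lie x y m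
        rw [h0] at hl
        exact (sub_eq_zero.mp hl.symm)
      by_cases hscal : ∀ x : L, ∃ c : ℂ, ∀ m : ↥D, ⁅x, m⁆ = c • m
      · choose χ hχ using hscal
        obtain ⟨e, he⟩ := exists_ne (0 : ↥D)
        exact ⟨e, he, χ, fun x => hχ x e⟩
      · push_neg at hscal
        obtain ⟨x₀, hx₀⟩ := hscal
        obtain ⟨c, hc⟩ := Module.End.exists_eigenvalue (LieModule.toEnd ℂ L (↥D) x₀)
        obtain ⟨e₀, he₀⟩ := hc.exists_hasEigenvector
        have heig : ⁅x₀, e₀⁆ = c • e₀ := by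
          have h1 := he₀.apply_eq_smul
          rwa [LieModule.toEnd_apply_apply] at h1
        have hE : ∀ m : ↥D, ⁅x₀, m⁆ = c • m → m ∈ Submodule.span ℂ {e₀} := by
          intro m hm
          by_contra hnm
          obtain ⟨hex', -⟩ := aux_pair hfr he₀.right hnm
          obtain ⟨m', hm'⟩ := hx₀ c
          apply hm'
          obtain ⟨s, t, rfl⟩ := hex' m'
          rw [lie_add, lie_smul, lie_smul, heig, hm]
          module
        have hsp : ∀ y : L, ⁅y, e₀⁆ ∈ Submodule.span ℂ {e₀} := by
          intro y
          apply hE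
          rw [hcomm x₀ y e₀, heig, lie_smul]
        choose χ hχ using fun y => Submodule.mem_span_singleton.mp (hsp y)
        exact ⟨e₀, he₀.right, χ, fun x => (hχ x).symm⟩
    · -- [D,D] ≠ 0 is a 1-dimensional ideal
      set g := Module.finBasisOfFinrankEq ℂ (↥D) hfr with hgdef
      set t0 : L := ⁅((g 0 : L)), ((g 1 : L))⁆ with ht0
      have hcoeD : ∀ m : ↥D, (m : L) =
          (g.repr m 0) • ((g 0 : L)) + (g.repr m 1) • ((g 1 : L)) := by
        intro m
        have hs := g.sum_repr m
        rw [Fin.sum_univ_two] at hs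
        calc (m : L) = ((g.repr m 0 • g 0 + g.repr m 1 • g 1 : ↥D) : L) := by rw [hs]
        _ = _ := by push_cast; rfl
      have hD2le : ∀ w ∈ LieAlgebra.derivedSeries ℂ L 2, w ∈ Submodule.span ℂ {t0} := by
        have hle : LieSubmodule.toSubmodule (LieAlgebra.derivedSeries ℂ L 2) ≤
            Submodule.span ℂ {t0} := by
          rw [h2eq, LieSubmodule.lieIdeal_oper_eq_linear_span', Submodule.span_le]
          rintro _ ⟨x, hx, n, hn, rfl⟩
          obtain ⟨a1, a2, hx'⟩ : ∃ a c, x = a • ((g 0 : L)) + c • ((g 1 : L)) :=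
            ⟨_, _, hcoeD ⟨x, hx⟩⟩
          obtain ⟨b1, b2, hn'⟩ : ∃ a c, n = a • ((g 0 : L)) + c • ((g 1 : L)) :=
            ⟨_, _, hcoeD ⟨n, hn⟩⟩
          have hskew : ⁅((g 1 : L)), ((g 0 : L))⁆ = -t0 := by
            rw [ht0, ← lie_skew]
          refine Submodule.mem_span_singleton.mpr ⟨a1 * b2 - a2 * b1, ?_⟩
          rw [hx', hn']
          simp only [add_lie, lie_add, smul_lie, lie_smul, lie_self, smul_zero,
            add_zero, zero_add, hskew, ← ht0]
          module
        intro w hw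
        exact hle hw
      obtain ⟨e', he'mem, he'ne⟩ : ∃ w, w ∈ LieAlgebra.derivedSeries ℂ L 2 ∧ w ≠ 0 := by
        by_contra h
        push_neg at h
        exact hD2 ((LieSubmodule.eq_bot_iff _).mpr fun m hm => h m hm)
      obtain ⟨cc, hcc⟩ := Submodule.mem_span_singleton.mp (hD2le e' he'mem)
      have hccne : cc ≠ 0 := by
        rintro rfl
        rw [zero_smul] at hcc
        exact he'ne hcc.symm
      have hsube : ∀ w ∈ LieAlgebra.derivedSeries ℂ L 2, w ∈ Submodule.span ℂ {e'} := by
        intro w hw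
        obtain ⟨c', hc'⟩ := Submodule.mem_span_singleton.mp (hD2le w hw)
        refine Submodule.mem_span_singleton.mpr ⟨c' / cc, ?_⟩
        rw [← hc', ← hcc, smul_smul, div_mul_cancel₀ _ hccne]
      have he'D : e' ∈ D := by
        have : LieAlgebra.derivedSeries ℂ L 2 ≤ D := by
          rw [hDdef, LieAlgebra.derivedSeries_def, LieAlgebra.derivedSeries_def]
          exact LieAlgebra.derivedSeriesOfIdeal_antitone (⊤ : LieIdeal ℂ L) (by norm_num)
        exact this he'mem
      have hsp : ∀ x : L, ⁅x, e'⁆ ∈ Submodule.span ℂ {e'} := by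
        intro x
        exact hsube _ ((LieAlgebra.derivedSeries ℂ L 2).lie_mem he'mem)
      choose χ hχ using fun x => Submodule.mem_span_singleton.mp (hsp x)
      refine ⟨⟨e', he'D⟩, ?_, χ, ?_⟩
      · intro h
        apply he'ne
        simpa using congrArg Subtype.val h
      · intro x
        apply Subtype.ext
        rw [LieSubmodule.coe_bracket]
        simp only [SetLike.val_smul]
        exact (hχ x).symm
  obtain ⟨e, he0, χ, hχ⟩ := hev
  have hspan_ne : Submodule.span ℂ {e} ≠ (⊤ : Submodule ℂ (↥D)) := by
    intro h
    have h1 : finrank ℂ (↥D) = 1 := by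
      conv_lhs => rw [← finrank_top ℂ (↥D), ← h]
      exact finrank_span_singleton he0
    rw [hfr] at h1; norm_num at h1
  obtain ⟨f, hf⟩ : ∃ f : ↥D, f ∉ Submodule.span ℂ {e} := by
    by_contra h
    push_neg at h
    exact hspan_ne (eq_top_iff.mpr fun m _ => h m)
  obtain ⟨hex, huniq⟩ := aux_pair hfr he0 hf
  choose A U hAU using fun x : L => hex ⁅x, f⁆
  have hdim1 : ∀ v : ↥D, (∀ (x : L) (d : ↥D), ⁅x, d⁆ ∈ Submodule.span ℂ {v}) → False := by
    intro v hv
    have htop := hspanM _ hv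
    have hle : finrank ℂ (Submodule.span ℂ ({v} : Set ↥D)) ≤ 1 := by
      rcases eq_or_ne v 0 with rfl | hvne
      · rw [Submodule.span_zero_singleton, finrank_bot]; norm_num
      · rw [finrank_span_singleton hvne]
    rw [htop, finrank_top, hfr] at hle
    norm_num at hle
  have hUne : ∃ x : L, U x ≠ 0 := by
    by_contra h
    push_neg at h
    apply hdim1 e
    intro x d
    obtain ⟨s, t, rfl⟩ := hex d
    rw [lie_add, lie_smul, lie_smul, hχ, hAU, h x]
    refine Submodule.mem_span_singleton.mpr ⟨s * χ x + t * A x, ?_⟩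
    module
  have hχne : ∃ x : L, χ x ≠ 0 := by
    by_contra h
    push_neg at h
    have hfe : ⁅((f : L)), e⁆ = (0 : ↥D) := by rw [hχ, h, zero_smul]
    have hef : ⁅((e : L)), f⁆ = (0 : ↥D) := by
      apply Subtype.ext
      rw [LieSubmodule.coe_bracket, LieSubmodule.coe_zero]
      have h1 := congrArg (Subtype.val) hfe
      rw [LieSubmodule.coe_bracket, LieSubmodule.coe_zero] at h1
      rw [← lie_skew, h1, neg_zero]
    have hDf : ∀ d : ↥D, ⁅((d : L)), f⁆ = (0 : ↥D) := by
      intro d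
      obtain ⟨s, t, hd⟩ := hex d
      have hdl : (d : L) = s • (e : L) + t • (f : L) := by
        rw [hd]; push_cast; rfl
      have hff : ⁅((f : L)), f⁆ = (0 : ↥D) := by
        apply Subtype.ext
        rw [LieSubmodule.coe_bracket, LieSubmodule.coe_zero, lie_self]
      rw [hdl, add_lie, smul_lie, smul_lie, hef, hff, smul_zero, smul_zero, add_zero]
    have hrel : ∀ u v : L, U v * A u - U u * A v = 0 := by
      intro u v
      have hl2 : ⁅u, ⁅v, f⁆⁆ - ⁅v, ⁅u, f⁆⁆ = (0 : ↥D) := by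
        rw [← lie_lie]
        exact hDf ⟨⁅u, v⁆, hmem u v⟩
      have hcalc : (U v * A u - U u * A v) • e + (U v * U u - U u * U v) • f = 0 := by
        rw [← hl2, hAU v, hAU u, lie_add, lie_add, lie_smul, lie_smul, lie_smul, lie_smul,
          hχ u, hχ v, h u, h v, hAU u, hAU v]
        module
      exact (huniq _ _ hcalc).1
    obtain ⟨x₁, hx₁⟩ := hUne
    apply hdim1 ((A x₁ / U x₁) • e + f)
    intro x d
    obtain ⟨s, t, rfl⟩ := hex d
    have hAx : A x = (A x₁ / U x₁) * U x := by
      have h1 := hrel x x₁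
      field_simp
      linear_combination h1
    refine Submodule.mem_span_singleton.mpr ⟨t * U x, ?_⟩
    rw [lie_add, lie_smul, lie_smul, hχ, hAU, h x, hAx]
    module
  have hcenter : LieAlgebra.center ℂ L = ⊥ := by
    rw [eq_bot_iff]
    intro z hz
    have hzD : z ∈ D := hpure hz
    have hz0 : ∀ x : L, ⁅x, z⁆ = (0 : L) := (LieModule.mem_maxTrivSubmodule ℂ L L z).mp hz
    set zm : ↥D := ⟨z, hzD⟩ with hzm
    have hzm0 : ∀ x : L, ⁅x, zm⁆ = (0 : ↥D) := by
      intro x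
      apply Subtype.ext
      rw [LieSubmodule.coe_bracket, LieSubmodule.coe_zero]
      exact hz0 x
    obtain ⟨s, t, hst⟩ := hex zm
    have hcoef : ∀ x : L, s * χ x + t * A x = 0 ∧ t * U x = 0 := by
      intro x
      apply huniq
      have h1 : ⁅x, zm⁆ = (s * χ x + t * A x) • e + (t * U x) • f := by
        rw [hst, lie_add, lie_smul, lie_smul, hχ, hAU]
        module
      rw [← h1]
      exact hzm0 x
    obtain ⟨x₁, hU₁⟩ := hUne
    obtain ⟨x₂, hχ₂⟩ := hχne
    have ht : t = 0 := by
      have h1 := (hcoef x₁).2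
      rcases mul_eq_zero.mp h1 with h1 | h1
      · exact h1
      · exact absurd h1 hU₁
    have hs : s = 0 := by
      have h1 := (hcoef x₂).1
      rw [ht, zero_mul, add_zero] at h1
      rcases mul_eq_zero.mp h1 with h1 | h1
      · exact h1
      · exact absurd h1 hχ₂
    have hzm2 : zm = 0 := by rw [hst, ht, hs, zero_smul, zero_smul, add_zero]
    have hz2 : z = 0 := by exact congrArg Subtype.val hzm2
    simp [hz2]
  refine ⟨hcenter, ?_⟩
  refine ⟨{ carrier := {x : L | ∀ d ∈ D, ⁅x, d⁆ = 0}
            add_mem' := ?_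
            zero_mem' := ?_
            smul_mem' := ?_
            lie_mem := ?_ }, ?_, ?_⟩
  · intro a b ha hb d hd
    rw [add_lie, ha d hd, hb d hd, add_zero]
  · intro d hd
    rw [zero_lie]
  · intro c x hx d hd
    rw [smul_lie, hx d hd, smul_zero]
  · intro x m hm d hd
    rw [lie_lie, hm d hd, hm ⁅x, d⁆ (D.lie_mem hd), lie_zero, sub_zero]
  · intro x
    exact Iff.rfl
  · constructor
    intro a b
    have hab : ∀ x : L, ⁅x, (⁅(a : L), (b : L)⁆ : L)⁆ = 0 := by
      intro x
      have h1 : ⁅⁅x, (a : L)⁆, (b : L)⁆ = (0 : L) := by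
        rw [← lie_skew, b.property _ (hmem x (a : L)), neg_zero]
      have h2 : ⁅(a : L), ⁅x, (b : L)⁆⁆ = (0 : L) :=
        a.property _ (hmem x (b : L))
      rw [leibniz_lie, h1, h2, zero_add]
    have hcent : ⁅(a : L), (b : L)⁆ ∈ LieAlgebra.center ℂ L :=
      (LieModule.mem_maxTrivSubmodule ℂ L L _).mpr hab
    rw [hcenter] at hcent
    have h0 : ⁅(a : L), (b : L)⁆ = 0 := by simpa using hcent
    exact Subtype.ext h0
end

section
/- Let L be a pure nonnilpotent solvable Lie algebra over ℂ of breadth 2 with dim[L,L] = 2 and dim L^k = 2 for all k ≥ 2. Then there exists an abelian subalgebra A of L with A ∩ [L,L] = {0} and L = A + [L,L], i.e., L is a semidirect product A ⋉ [L,L]. -/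
open Module

lemma aux_exists_inj {F V ι : Type*} [Field F] [AddCommGroup V] [Module F V]
    [FiniteDimensional F V] (h2 : finrank F V = 2) (f : ι → Module.End F V)
    (hadd : ∀ x y : ι, ∃ z, f x + f y = f z)
    (hcomm : ∀ x y : ι, Commute (f x) (f y))
    (htop : ⨆ x, LinearMap.range (f x) = ⊤) :
    ∃ x, Function.Injective (f x) := by
  by_contra hno
  push_neg at hno
  have hrank : ∀ x, finrank F (LinearMap.range (f x)) ≤ 1 := by
    intro x
    have hker : LinearMap.ker (f x) ≠ ⊥ := fun h => hno x (LinearMap.ker_eq_bot.mp h)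
    have h1 : 0 < finrank F (LinearMap.ker (f x)) := by
      rw [Module.finrank_pos_iff]
      exact Submodule.nontrivial_iff_ne_bot.mpr hker
    have := LinearMap.finrank_range_add_finrank_ker (f x)
    omega
  -- find x with range f x nonzero
  have hx : ∃ x, f x ≠ 0 := by
    by_contra h
    push_neg at h
    have : (⊤ : Submodule F V) = ⊥ := by
      rw [← htop]
      simp [h]
    have hnt : Nontrivial V := Module.nontrivial_of_finrank_pos (R := F) (by omega)
    exact bot_ne_top this.symm
  obtain ⟨x, hxne⟩ := hx
  have hrx : finrank F (LinearMap.range (f x)) = 1 := by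
    have : LinearMap.range (f x) ≠ ⊥ := by
      simpa [LinearMap.range_eq_bot] using hxne
    have h1 : 0 < finrank F (LinearMap.range (f x)) := by
      rw [Module.finrank_pos_iff]
      exact Submodule.nontrivial_iff_ne_bot.mpr this
    have := hrank x
    omega
  -- find y with range f y not ≤ range f x
  have hy : ∃ y, ¬ LinearMap.range (f y) ≤ LinearMap.range (f x) := by
    by_contra h
    push_neg at h
    have : (⊤ : Submodule F V) ≤ LinearMap.range (f x) := by
      rw [← htop]; exact iSup_le h
    have := Submodule.finrank_mono (le_top.antisymm this).symm.le
    rw [finrank_top] at this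
    omega
  obtain ⟨y, hyx⟩ := hy
  have hry : finrank F (LinearMap.range (f y)) = 1 := by
    have : LinearMap.range (f y) ≠ ⊥ := by
      intro h; rw [h] at hyx; exact hyx bot_le
    have h1 : 0 < finrank F (LinearMap.range (f y)) := by
      rw [Module.finrank_pos_iff]
      exact Submodule.nontrivial_iff_ne_bot.mpr this
    have := hrank y
    omega
  -- sup of ranges is top
  have hlt : LinearMap.range (f x) < LinearMap.range (f x) ⊔ LinearMap.range (f y) :=
    lt_of_le_of_ne le_sup_left (fun h => hyx (h ▸ le_sup_right))
  have hsupr : finrank F (LinearMap.range (f x) ⊔ LinearMap.range (f y) : Submodule F V) = 2 := by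
    have h1 := Submodule.finrank_lt_finrank_of_lt hlt
    have h2' := Submodule.finrank_le (LinearMap.range (f x) ⊔ LinearMap.range (f y))
    omega
  have hinf : LinearMap.range (f x) ⊓ LinearMap.range (f y) = ⊥ := by
    have := Submodule.finrank_sup_add_finrank_inf_eq (LinearMap.range (f x)) (LinearMap.range (f y))
    have h0 : finrank F ↥(LinearMap.range (f x) ⊓ LinearMap.range (f y)) = 0 := by omega
    exact Submodule.finrank_eq_zero.mp h0
  -- f x ∘ f y = 0 and f y ∘ f x = 0
  have hcomp : ∀ v : V, f x (f y v) = 0 := by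
    intro v
    have h1 : f x (f y v) ∈ LinearMap.range (f x) := ⟨f y v, rfl⟩
    have h2' : f x (f y v) ∈ LinearMap.range (f y) := by
      have h := DFunLike.congr_fun (hcomm x y) v
      simp only [Module.End.mul_apply] at h
      rw [h]
      exact ⟨f x v, rfl⟩
    have : f x (f y v) ∈ (⊥ : Submodule F V) := hinf ▸ ⟨h1, h2'⟩
    simpa using this
  -- kernels
  have hkx : finrank F (LinearMap.ker (f x)) = 1 := by
    have := LinearMap.finrank_range_add_finrank_ker (f x); omega
  have hky : finrank F (LinearMap.ker (f y)) = 1 := by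
    have := LinearMap.finrank_range_add_finrank_ker (f y); omega
  have hrange_ker : LinearMap.range (f y) = LinearMap.ker (f x) := by
    apply Submodule.eq_of_le_of_finrank_le
    · rintro _ ⟨v, rfl⟩
      exact hcomp v
    · omega
  have hrange_ker' : LinearMap.range (f x) = LinearMap.ker (f y) := by
    apply Submodule.eq_of_le_of_finrank_le
    · rintro _ ⟨v, rfl⟩
      have h := DFunLike.congr_fun (hcomm x y) v
      simp only [Module.End.mul_apply] at h
      rw [LinearMap.mem_ker, ← h]
      exact hcomp v
    · omega
  -- f (x+y) not injective gives contradiction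
  obtain ⟨z, hz⟩ := hadd x y
  obtain ⟨v, hv0, hvne⟩ : ∃ v : V, f z v = 0 ∧ v ≠ 0 := by
    have hker : LinearMap.ker (f z) ≠ ⊥ := fun h => hno z (LinearMap.ker_eq_bot.mp h)
    obtain ⟨v, hv, hvne⟩ := Submodule.exists_mem_ne_zero_of_ne_bot hker
    exact ⟨v, hv, hvne⟩
  have hsum : f x v + f y v = 0 := by
    have : (f x + f y) v = 0 := by rw [hz]; exact hv0
    simpa using this
  have hfx : f x v ∈ LinearMap.range (f x) ⊓ LinearMap.range (f y) := by
    constructor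
    · exact ⟨v, rfl⟩
    · have : f x v = -(f y v) := by linear_combination (norm := module) hsum
      rw [this]
      exact Submodule.neg_mem _ ⟨v, rfl⟩
  have hfxv : f x v = 0 := by rw [hinf] at hfx; simpa using hfx
  have hfyv : f y v = 0 := by rw [hfxv, zero_add] at hsum; exact hsum
  have : v ∈ LinearMap.ker (f x) ⊓ LinearMap.ker (f y) := ⟨hfxv, hfyv⟩
  rw [← hrange_ker, ← hrange_ker', inf_comm, hinf] at this
  exact hvne (by simpa using this)

lemma pair_indep {L : Type*} [LieRing L] [LieAlgebra ℂ L] (u v : L) (h : ⁅u,v⁆ ≠ 0) :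
    LinearIndependent ℂ ![u, v] := by
  rw [LinearIndependent.pair_iff]
  intro s t hst
  have hv : v ≠ 0 := by rintro rfl; simp at h
  have h1 : ⁅s • u + t • v, v⁆ = 0 := by rw [hst]; simp
  rw [add_lie, smul_lie, smul_lie, lie_self, smul_zero, add_zero] at h1
  have hs : s = 0 := by
    rcases smul_eq_zero.mp h1 with h' | h'
    · exact h'
    · exact absurd h' h
  subst hs
  rw [zero_smul, zero_add] at hst
  exact ⟨rfl, (smul_eq_zero.mp hst).resolve_right hv⟩

lemma span_pair_eq {L : Type*} [LieRing L] [LieAlgebra ℂ L] [FiniteDimensional ℂ L]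
    (u v : L) (hli : LinearIndependent ℂ ![u, v]) (P : Submodule ℂ L)
    (hP : finrank ℂ P = 2) (hu : u ∈ P) (hv : v ∈ P) :
    Submodule.span ℂ {u, v} = P := by
  apply Submodule.eq_of_le_of_finrank_le
  · rw [Submodule.span_le]
    rintro x (rfl | rfl) <;> assumption
  · rw [hP, ← Matrix.range_cons_cons_empty u v, finrank_span_eq_card hli]
    simp

theorem stmt17 (L : Type*) [LieRing L] [LieAlgebra ℂ L] [FiniteDimensional ℂ L]
    [LieAlgebra.IsSolvable L] (hnn : ¬ LieModule.IsNilpotent L L)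
    (hpure : LieAlgebra.center ℂ L ≤ LieAlgebra.derivedSeries ℂ L 1)
    (hb : HasBreadth ℂ L 2)
    (hder : finrank ℂ (LieAlgebra.derivedSeries ℂ L 1) = 2)
    (hlcs : ∀ k : ℕ, 2 ≤ k → finrank ℂ (LieModule.lowerCentralSeries ℂ L L k) = 2) :
    ∃ A : LieSubalgebra ℂ L, IsLieAbelian A ∧
      A.toSubmodule ⊓ (LieAlgebra.derivedSeries ℂ L 1).toSubmodule = ⊥ ∧
      A.toSubmodule ⊔ (LieAlgebra.derivedSeries ℂ L 1).toSubmodule = ⊤ := by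
  set D := LieAlgebra.derivedSeries ℂ L 1 with hD
  have hLD : ⁅(⊤ : LieIdeal ℂ L), (D : LieSubmodule ℂ L L)⁆ = D := by
    have h1 : (D : LieSubmodule ℂ L L) = LieModule.lowerCentralSeries ℂ L L 1 := rfl
    have h2 : LieModule.lowerCentralSeries ℂ L L 2 = ⁅(⊤ : LieIdeal ℂ L),
        LieModule.lowerCentralSeries ℂ L L 1⁆ := by
      rw [LieModule.lowerCentralSeries_succ]
    have hle : LieModule.lowerCentralSeries ℂ L L 2 ≤ LieModule.lowerCentralSeries ℂ L L 1 :=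
      LieModule.antitone_lowerCentralSeries ℂ L L (by norm_num)
    have heq : LieModule.lowerCentralSeries ℂ L L 2 = LieModule.lowerCentralSeries ℂ L L 1 := by
      rw [← LieSubmodule.toSubmodule_inj]
      apply Submodule.eq_of_le_of_finrank_le hle
      exact le_of_eq (hder.trans (hlcs 2 le_rfl).symm)
    rw [h1, ← h2, heq]
  have habD : ∀ u v : L, u ∈ D → v ∈ D → ⁅u, v⁆ = 0 := by
    by_contra hcon
    push_neg at hcon
    obtain ⟨u, v, hu, hv, huv⟩ := hcon
    set e := ⁅u, v⁆ with he
    set DD := LieAlgebra.derivedSeries ℂ L 2 with hDD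
    have hDD2 : DD = ⁅D, D⁆ := LieAlgebra.derivedSeriesOfIdeal_succ ℂ L ⊤ 1
    have heDD : e ∈ DD := by
      rw [hDD2]
      exact LieSubmodule.lie_mem_lie hu hv
    -- DD ≠ D
    have hDDne : DD ≠ D := by
      intro hEq
      have hall : ∀ k : ℕ, LieAlgebra.derivedSeries ℂ L (k + 1) = D := by
        intro k
        induction k with
        | zero => rfl
        | succ k ih =>
          calc LieAlgebra.derivedSeries ℂ L (k + 2)
              = ⁅LieAlgebra.derivedSeries ℂ L (k+1), LieAlgebra.derivedSeries ℂ L (k+1)⁆ :=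
                LieAlgebra.derivedSeriesOfIdeal_succ ℂ L ⊤ (k+1)
            _ = ⁅D, D⁆ := by rw [ih]
            _ = DD := hDD2.symm
            _ = D := hEq
      obtain ⟨k, hk⟩ := (LieAlgebra.isSolvable_iff ℂ L).mp inferInstance
      have : D = ⊥ := by
        have h1 := hall k
        have h2 : LieAlgebra.derivedSeries ℂ L (k+1) ≤ LieAlgebra.derivedSeries ℂ L k :=
          LieAlgebra.derivedSeriesOfIdeal_succ_le ⊤ k
        rw [h1, hk] at h2
        exact le_bot_iff.mp h2
      have h0 : LieSubmodule.toSubmodule D = ⊥ := by rw [this]; rfl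
      have h2 : finrank ℂ (LieSubmodule.toSubmodule D) = 2 := hder
      rw [h0, finrank_bot] at h2
      exact two_ne_zero h2.symm
    -- finrank DD = 1
    have hDDle : DD ≤ D := LieAlgebra.derivedSeriesOfIdeal_succ_le (R := ℂ) (L := L) ⊤ 1
    have hene : e ≠ 0 := huv
    have hfr1 : finrank ℂ (DD : LieSubmodule ℂ L L).toSubmodule = 1 := by
      have hlt : (DD : LieSubmodule ℂ L L).toSubmodule < (D : LieSubmodule ℂ L L).toSubmodule := by
        refine lt_of_le_of_ne hDDle ?_
        intro hEq
        exact hDDne (by rwa [← LieSubmodule.toSubmodule_inj] )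
      have h2' := Submodule.finrank_lt_finrank_of_lt hlt
      have hpos : 0 < finrank ℂ (DD : LieSubmodule ℂ L L).toSubmodule := by
        rw [Module.finrank_pos_iff]
        exact ⟨⟨e, heDD⟩, 0, by simp [Subtype.ext_iff, hene]⟩
      have : finrank ℂ (D : LieSubmodule ℂ L L).toSubmodule = 2 := hder
      omega
    have hspanDD : Submodule.span ℂ {e} = (DD : LieSubmodule ℂ L L).toSubmodule := by
      apply Submodule.eq_of_le_of_finrank_le
      · rw [Submodule.span_singleton_le_iff_mem]; exact heDD
      · rw [hfr1, finrank_span_singleton hene]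
    -- ⁅x, e⁆ is a multiple of e
    have hlam : ∀ x : L, ∃ c : ℂ, ⁅x, e⁆ = c • e := by
      intro x
      have hmem : ⁅x, e⁆ ∈ DD := (DD : LieSubmodule ℂ L L).lie_mem heDD
      have hmem2 : ⁅x, e⁆ ∈ Submodule.span ℂ ({e} : Set L) := by
        rw [hspanDD]; exact hmem
      obtain ⟨c, hc⟩ := Submodule.mem_span_singleton.mp hmem2
      exact ⟨c, hc.symm⟩
    -- u, v span D
    have hli : LinearIndependent ℂ ![u, v] := pair_indep u v huv
    have hsp : Submodule.span ℂ {u, v} = (D : LieSubmodule ℂ L L).toSubmodule :=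
      span_pair_eq u v hli _ hder hu hv
    have heD : e ∈ D := hDDle heDD
    obtain ⟨a, b, hab⟩ := Submodule.mem_span_pair.mp (by rw [hsp]; exact heD :
      e ∈ Submodule.span ℂ {u, v})
    have hue : ⁅u, e⁆ = b • e := by
      conv_lhs => rw [← hab]
      rw [lie_add, lie_smul, lie_smul, lie_self, smul_zero, zero_add, ← he]
    have hve : ⁅v, e⁆ = -(a • e) := by
      conv_lhs => rw [← hab]
      rw [lie_add, lie_smul, lie_smul, lie_self, smul_zero, add_zero, ← lie_skew, he, smul_neg]
    -- get w ∈ D with ⁅w, e⁆ = e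
    obtain ⟨w, hwD, hwe⟩ : ∃ w : L, w ∈ D ∧ ⁅w, e⁆ = e := by
      rcases eq_or_ne b 0 with hb | hb
      · have ha : a ≠ 0 := by
          intro ha
          rw [ha, hb] at hab
          simp at hab
          exact hene hab.symm
        refine ⟨(-a⁻¹) • v, Submodule.smul_mem _ _ hv, ?_⟩
        rw [smul_lie, hve, smul_neg, neg_smul, neg_neg, smul_smul, inv_mul_cancel₀ ha, one_smul]
      · refine ⟨b⁻¹ • u, Submodule.smul_mem _ _ hu, ?_⟩
        rw [smul_lie, hue, smul_smul, inv_mul_cancel₀ hb, one_smul]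
    -- e, w span D
    have hliew : LinearIndependent ℂ ![w, e] := pair_indep w e (by rw [hwe]; exact hene)
    have hspew : Submodule.span ℂ {w, e} = (D : LieSubmodule ℂ L L).toSubmodule :=
      span_pair_eq w e hliew _ hder hwD heD
    -- ∀ x, ⁅x, w⁆ ∈ span e
    have hxw : ∀ x : L, ⁅x, w⁆ ∈ Submodule.span ℂ ({e} : Set L) := by
      intro x
      have hmem : ⁅x, w⁆ ∈ D := (D : LieSubmodule ℂ L L).lie_mem hwD
      obtain ⟨p, q, hpq⟩ := Submodule.mem_span_pair.mp (by rw [hspew]; exact hmem :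
        ⁅x, w⁆ ∈ Submodule.span ℂ {w, e})
      obtain ⟨lam, hl⟩ := hlam x
      have hJ := leibniz_lie x w e
      rw [hwe, hl, lie_smul, hwe, ← hpq, add_lie, smul_lie, smul_lie, lie_self, smul_zero,
        add_zero, hwe] at hJ
      -- hJ : lam • e = p • e + lam • e
      have hp : p • e = 0 := right_eq_add.mp hJ
      have hp0 : p = 0 := (smul_eq_zero.mp hp).resolve_right hene
      rw [hp0, zero_smul, zero_add] at hpq
      rw [← hpq]
      exact Submodule.mem_span_singleton.mpr ⟨q, rfl⟩
    -- conclude: ⁅⊤, D⁆ ≤ span e, contradiction with finrank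
    have hsub : (⁅(⊤ : LieIdeal ℂ L), (D : LieSubmodule ℂ L L)⁆ :
        LieSubmodule ℂ L L).toSubmodule ≤ Submodule.span ℂ ({e} : Set L) := by
      rw [LieSubmodule.lieIdeal_oper_eq_linear_span']
      rw [Submodule.span_le]
      rintro m ⟨x, -, n, hn, rfl⟩
      obtain ⟨s, t, hst⟩ := Submodule.mem_span_pair.mp (by rw [hspew]; exact hn :
        n ∈ Submodule.span ℂ {w, e})
      rw [← hst, lie_add, lie_smul, lie_smul]
      refine Submodule.add_mem _ (Submodule.smul_mem _ _ (hxw x)) (Submodule.smul_mem _ _ ?_)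
      obtain ⟨lam, hl⟩ := hlam x
      rw [hl]
      exact Submodule.smul_mem _ _ (Submodule.mem_span_singleton_self e)
    rw [hLD] at hsub
    have hfr2 := Submodule.finrank_mono hsub
    rw [finrank_span_singleton hene] at hfr2
    have : finrank ℂ (LieSubmodule.toSubmodule D) = 2 := hder
    omega
  set Dm := LieSubmodule.toSubmodule D with hDm
  have hmemD : ∀ x y : L, ⁅x, y⁆ ∈ D :=
    fun x y => LieSubmodule.lie_mem_lie (LieSubmodule.mem_top x) (LieSubmodule.mem_top y)
  have h2 : finrank ℂ Dm = 2 := hder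
  have hDstab : ∀ x : L, ∀ m ∈ Dm, (LieAlgebra.ad ℂ L x) m ∈ Dm := by
    intro x m hm
    rw [LieAlgebra.ad_apply]
    exact D.lie_mem hm
  set φ : L → Module.End ℂ Dm := fun x => LinearMap.restrict (LieAlgebra.ad ℂ L x) (hDstab x)
    with hφ
  have hφapp : ∀ (x : L) (m : Dm), (φ x m : L) = ⁅x, (m : L)⁆ := by
    intro x m
    rw [hφ]
    simp [LinearMap.restrict_apply, LieAlgebra.ad_apply]
  have hadd : ∀ x y : L, ∃ z, φ x + φ y = φ z := by
    intro x y
    refine ⟨x + y, ?_⟩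
    ext m
    simp only [LinearMap.add_apply, Submodule.coe_add, hφapp, add_lie]
  have hcomm : ∀ x y : L, Commute (φ x) (φ y) := by
    intro x y
    ext m
    simp only [Module.End.mul_apply, hφapp]
    rw [leibniz_lie, habD _ _ (hmemD x y) m.2, zero_add]
  have htop : ⨆ x, LinearMap.range (φ x) = ⊤ := by
    apply Submodule.map_injective_of_injective (Submodule.injective_subtype Dm)
    rw [Submodule.map_subtype_top]
    apply le_antisymm (Submodule.map_subtype_le _ _)
    have := hLD
    rw [← LieSubmodule.toSubmodule_inj] at this
    conv_lhs => rw [show Dm = LieSubmodule.toSubmodule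
      (⁅(⊤ : LieIdeal ℂ L), (D : LieSubmodule ℂ L L)⁆ : LieSubmodule ℂ L L) from this.symm]
    rw [LieSubmodule.lieIdeal_oper_eq_linear_span', Submodule.span_le]
    rintro m ⟨x, -, n, hn, rfl⟩
    refine ⟨φ x ⟨n, hn⟩, ?_, hφapp x ⟨n, hn⟩⟩
    exact (le_iSup (fun x => LinearMap.range (φ x)) x) ⟨⟨n, hn⟩, rfl⟩
  obtain ⟨x₀, hinj⟩ := aux_exists_inj h2 φ hadd hcomm htop
  -- basic facts about ker (ad x₀)
  have hinf : LinearMap.ker (LieAlgebra.ad ℂ L x₀) ⊓ Dm = ⊥ := by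
    rw [eq_bot_iff]
    rintro y ⟨hk, hdm⟩
    have hy0 : φ x₀ ⟨y, hdm⟩ = 0 := by
      apply Subtype.ext
      rw [hφapp]
      simpa [LieAlgebra.ad_apply] using hk
    have h0 := hinj (a₂ := 0) (by rw [hy0]; simp)
    rw [Submodule.mem_bot]
    simpa [Subtype.ext_iff] using h0
  have hrange : LinearMap.range (LieAlgebra.ad ℂ L x₀) = Dm := by
    apply le_antisymm
    · rintro _ ⟨y, rfl⟩
      rw [LieAlgebra.ad_apply]; exact hmemD x₀ y
    · intro d hd
      obtain ⟨m, hm⟩ := (LinearMap.injective_iff_surjective).mp hinj ⟨d, hd⟩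
      refine ⟨m, ?_⟩
      have hcoe := congrArg Subtype.val hm
      rw [hφapp] at hcoe
      simpa [LieAlgebra.ad_apply] using hcoe
  have hsup : LinearMap.ker (LieAlgebra.ad ℂ L x₀) ⊔ Dm = ⊤ := by
    have hrk := LinearMap.finrank_range_add_finrank_ker (LieAlgebra.ad ℂ L x₀)
    rw [hrange, h2] at hrk
    have hsi := Submodule.finrank_sup_add_finrank_inf_eq
      (LinearMap.ker (LieAlgebra.ad ℂ L x₀)) Dm
    rw [hinf, finrank_bot, h2] at hsi
    apply Submodule.eq_top_of_finrank_eq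
    omega
  -- the subalgebra A = ker (ad x₀)
  set A : LieSubalgebra ℂ L :=
    { toSubmodule := LinearMap.ker (LieAlgebra.ad ℂ L x₀)
      lie_mem' := by
        intro x y hx hy
        have hx' : ⁅x₀, x⁆ = 0 := by simpa [LieAlgebra.ad_apply] using hx
        have hy' : ⁅x₀, y⁆ = 0 := by simpa [LieAlgebra.ad_apply] using hy
        show ⁅x, y⁆ ∈ LinearMap.ker (LieAlgebra.ad ℂ L x₀)
        rw [LinearMap.mem_ker, LieAlgebra.ad_apply, leibniz_lie, hx', hy']
        simp } with hA
  have hAsub : A.toSubmodule = LinearMap.ker (LieAlgebra.ad ℂ L x₀) := rfl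
  refine ⟨A, ?_, ?_, ?_⟩
  · constructor
    intro a b
    have hmem1 : ⁅(a : L), (b : L)⁆ ∈ LinearMap.ker (LieAlgebra.ad ℂ L x₀) :=
      A.lie_mem a.2 b.2
    have hmem2 : ⁅(a : L), (b : L)⁆ ∈ Dm := hmemD a b
    have hb : ⁅(a : L), (b : L)⁆ ∈ (⊥ : Submodule ℂ L) := hinf ▸ ⟨hmem1, hmem2⟩
    rw [Submodule.mem_bot] at hb
    exact Subtype.ext hb
  · rw [hAsub]
    exact hinf
  · rw [hAsub]
    exact hsup
end

section
/- For γ, δ ∈ ℂ \ {0}, the 3-dimensional Lie algebras L_γ and L_δ with basis {x₁, x₂, x₃} and nonzero brackets [x₁,x₂] = x₂, [x₁,x₃] = γx₃ (respectively δx₃) are isomorphic if and only if γ = δ or γ = δ⁻¹. -/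
lemma lieEquivOfBasis {L L' : Type*} [LieRing L] [LieAlgebra ℂ L] [LieRing L'] [LieAlgebra ℂ L']
    {ι : Type*} (B : Module.Basis ι ℂ L) (f : L ≃ₗ[ℂ] L')
    (h : ∀ i j, f ⁅B i, B j⁆ = ⁅f (B i), f (B j)⁆) :
    Nonempty (L ≃ₗ⁅ℂ⁆ L') := by
  have key : ∀ x y : L, f ⁅x, y⁆ = ⁅f x, f y⁆ := by
    let F1 : L →ₗ[ℂ] L →ₗ[ℂ] L' := LinearMap.mk₂ ℂ (fun x y => f ⁅x, y⁆)
      (by intros; simp [add_lie]) (by intros; simp [smul_lie])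
      (by intros; simp [lie_add]) (by intros; simp [lie_smul])
    let F2 : L →ₗ[ℂ] L →ₗ[ℂ] L' := LinearMap.mk₂ ℂ (fun x y => ⁅f x, f y⁆)
      (by intros; simp [add_lie]) (by intros; simp [smul_lie])
      (by intros; simp [lie_add]) (by intros; simp [lie_smul])
    have heq : F1 = F2 := B.ext fun i => B.ext fun j => h i j
    intro x y
    have := LinearMap.congr_fun (LinearMap.congr_fun heq x) y
    simpa [F1, F2] using this
  exact ⟨{ f with map_lie' := key _ _ }⟩

theorem stmt18 (Lg Ld : Type*) [LieRing Lg] [LieAlgebra ℂ Lg] [LieRing Ld] [LieAlgebra ℂ Ld]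
    (γ δ : ℂ) (hγ : γ ≠ 0) (hδ : δ ≠ 0)
    (Bg : Module.Basis (Fin 3) ℂ Lg)
    (hg1 : ⁅Bg 0, Bg 1⁆ = Bg 1) (hg2 : ⁅Bg 0, Bg 2⁆ = γ • Bg 2) (hg3 : ⁅Bg 1, Bg 2⁆ = 0)
    (Bd : Module.Basis (Fin 3) ℂ Ld)
    (hd1 : ⁅Bd 0, Bd 1⁆ = Bd 1) (hd2 : ⁅Bd 0, Bd 2⁆ = δ • Bd 2) (hd3 : ⁅Bd 1, Bd 2⁆ = 0) :
    Nonempty (Lg ≃ₗ⁅ℂ⁆ Ld) ↔ (γ = δ ∨ γ = δ⁻¹) := by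
  have skd1 : ⁅Bd 1, Bd 0⁆ = -Bd 1 := by rw [← lie_skew, hd1]
  have skd2 : ⁅Bd 2, Bd 0⁆ = -(δ • Bd 2) := by rw [← lie_skew, hd2]
  have skd3 : ⁅Bd 2, Bd 1⁆ = 0 := by rw [← lie_skew, hd3, neg_zero]
  have skg1 : ⁅Bg 1, Bg 0⁆ = -Bg 1 := by rw [← lie_skew, hg1]
  have skg2 : ⁅Bg 2, Bg 0⁆ = -(γ • Bg 2) := by rw [← lie_skew, hg2]
  have skg3 : ⁅Bg 2, Bg 1⁆ = 0 := by rw [← lie_skew, hg3, neg_zero]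
  constructor
  · rintro ⟨e⟩
    -- bracket formula in coordinates
    have hbr : ∀ x y z x' y' z' : ℂ,
        ⁅x • Bd 0 + y • Bd 1 + z • Bd 2, x' • Bd 0 + y' • Bd 1 + z' • Bd 2⁆
          = (0:ℂ) • Bd 0 + (x*y' - y*x') • Bd 1 + (δ*(x*z' - z*x')) • Bd 2 := by
      intro x y z x' y' z'
      simp only [lie_add, add_lie, lie_smul, smul_lie, lie_self, smul_zero, hd1, hd2, hd3,
        skd1, skd2, skd3, smul_neg, smul_smul]
      module
    -- coefficient extraction
    have hco : ∀ x y z x' y' z' : ℂ,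
        x • Bd 0 + y • Bd 1 + z • Bd 2 = x' • Bd 0 + y' • Bd 1 + z' • Bd 2 →
        x = x' ∧ y = y' ∧ z = z' := by
      intro x y z x' y' z' h
      have h0 := congrArg (fun u => Bd.repr u 0) h
      have h1 := congrArg (fun u => Bd.repr u 1) h
      have h2 := congrArg (fun u => Bd.repr u 2) h
      simp [Finsupp.single_apply] at h0 h1 h2
      exact ⟨h0, h1, h2⟩
    have hexp : ∀ u : Lg, e u = (Bd.repr (e u) 0) • Bd 0 + (Bd.repr (e u) 1) • Bd 1 +
        (Bd.repr (e u) 2) • Bd 2 := by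
      intro u
      have := Bd.sum_repr (e u)
      rw [Fin.sum_univ_three] at this
      exact this.symm
    obtain ⟨p0, p1, p2, E0⟩ : ∃ a b c, e (Bg 0) = a • Bd 0 + b • Bd 1 + c • Bd 2 :=
      ⟨_, _, _, hexp _⟩
    obtain ⟨q0, q1, q2, E1⟩ : ∃ a b c, e (Bg 1) = a • Bd 0 + b • Bd 1 + c • Bd 2 :=
      ⟨_, _, _, hexp _⟩
    obtain ⟨r0, r1, r2, E2⟩ : ∃ a b c, e (Bg 2) = a • Bd 0 + b • Bd 1 + c • Bd 2 :=
      ⟨_, _, _, hexp _⟩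
    have hA : q0 • Bd 0 + q1 • Bd 1 + q2 • Bd 2
        = (0:ℂ) • Bd 0 + (p0*q1 - p1*q0) • Bd 1 + (δ*(p0*q2 - p2*q0)) • Bd 2 := by
      calc q0 • Bd 0 + q1 • Bd 1 + q2 • Bd 2 = e (Bg 1) := E1.symm
        _ = e ⁅Bg 0, Bg 1⁆ := by rw [hg1]
        _ = ⁅e (Bg 0), e (Bg 1)⁆ := e.map_lie _ _
        _ = _ := by rw [E0, E1, hbr]
    obtain ⟨A0, A1, A2⟩ := hco _ _ _ _ _ _ hA
    have hB : (γ*r0) • Bd 0 + (γ*r1) • Bd 1 + (γ*r2) • Bd 2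
        = (0:ℂ) • Bd 0 + (p0*r1 - p1*r0) • Bd 1 + (δ*(p0*r2 - p2*r0)) • Bd 2 := by
      calc (γ*r0) • Bd 0 + (γ*r1) • Bd 1 + (γ*r2) • Bd 2 = γ • e (Bg 2) := by
            rw [E2]; module
        _ = e (γ • Bg 2) := (e.toLinearEquiv.map_smul γ _).symm
        _ = e ⁅Bg 0, Bg 2⁆ := by rw [hg2]
        _ = ⁅e (Bg 0), e (Bg 2)⁆ := e.map_lie _ _
        _ = _ := by rw [E0, E2, hbr]
    obtain ⟨B0, B1, B2⟩ := hco _ _ _ _ _ _ hB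
    have hr0 : r0 = 0 := by
      rcases mul_eq_zero.mp B0 with h | h
      · exact absurd h hγ
      · exact h
    have einj : Function.Injective e := e.injective
    have ez : e (0 : Lg) = 0 := e.toLinearEquiv.map_zero
    have esub : ∀ x y : Lg, e (x - y) = e x - e y := fun x y => e.toLinearEquiv.map_sub x y
    have esmul : ∀ (c : ℂ) (x : Lg), e (c • x) = c • e x :=
      fun c x => e.toLinearEquiv.map_smul c x
    have hq_ne : ¬(q1 = 0 ∧ q2 = 0) := by
      rintro ⟨h1, h2⟩
      apply Bg.ne_zero 1
      apply einj
      rw [E1, A0, h1, h2, ez]; module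
    have hr_ne : ¬(r1 = 0 ∧ r2 = 0) := by
      rintro ⟨h1, h2⟩
      apply Bg.ne_zero 2
      apply einj
      rw [E2, hr0, h1, h2, ez]; module
    -- linear independence of the images
    have hind2 : ¬(q2 = 0 ∧ r2 = 0) := by
      rintro ⟨h1, h2⟩
      have hq1 : q1 ≠ 0 := fun hh => hq_ne ⟨hh, h1⟩
      have hz : r1 • Bg 1 - q1 • Bg 2 = 0 := by
        apply einj
        rw [esub, esmul, esmul, E1, E2, A0, hr0, h1, h2, ez]; module
      have := congrArg (fun u => Bg.repr u 1) hz
      simp [Finsupp.single_apply] at this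
      exact hr_ne ⟨this, h2⟩
    have hind1 : ¬(q1 = 0 ∧ r1 = 0) := by
      rintro ⟨h1, h2⟩
      have hq2 : q2 ≠ 0 := fun hh => hq_ne ⟨h1, hh⟩
      have hz : r2 • Bg 1 - q2 • Bg 2 = 0 := by
        apply einj
        rw [esub, esmul, esmul, E1, E2, A0, hr0, h1, h2, ez]; module
      have := congrArg (fun u => Bg.repr u 2) hz
      simp [Finsupp.single_apply] at this
      exact hq2 this
    rw [A0] at A1 A2
    rw [hr0] at B1 B2
    -- A1 : q1 = p0*q1 - p1*0 ; A2 : q2 = δ*(p0*q2 - p2*0)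
    -- B1 : γ*r1 = p0*r1 - p1*0 ; B2 : γ*r2 = δ*(p0*r2 - p2*0)
    by_cases hq1 : q1 = 0
    · -- q1 = 0 : then q2 ≠ 0 and r1 ≠ 0, giving δ*p0 = 1 and γ = p0
      have hq2 : q2 ≠ 0 := fun hh => hq_ne ⟨hq1, hh⟩
      have hr1 : r1 ≠ 0 := fun hh => hind1 ⟨hq1, hh⟩
      have hdp : δ * p0 = 1 := by
        have h2' : (δ * p0) * q2 = 1 * q2 := by linear_combination -A2
        exact mul_right_cancel₀ hq2 h2'
      have hγp : γ = p0 := by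
        have h1' : γ * r1 = p0 * r1 := by linear_combination B1
        exact mul_right_cancel₀ hr1 h1'
      right
      have : δ * γ = 1 := by rw [hγp]; exact hdp
      exact eq_inv_of_mul_eq_one_left (by linear_combination this)
    · -- q1 ≠ 0 : then p0 = 1
      have hp0 : p0 = 1 := by
        have h1' : p0 * q1 = 1 * q1 := by linear_combination -A1
        exact mul_right_cancel₀ hq1 h1'
      subst hp0
      by_cases hr2 : r2 = 0
      · have hq2 : q2 ≠ 0 := fun hh => hind2 ⟨hh, hr2⟩
        have hr1 : r1 ≠ 0 := fun hh => hr_ne ⟨hh, hr2⟩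
        have hδ1 : δ = 1 := by
          have h2' : δ * q2 = 1 * q2 := by linear_combination -A2
          exact mul_right_cancel₀ hq2 h2'
        have hγ1 : γ = 1 := by
          have h1' : γ * r1 = 1 * r1 := by linear_combination B1
          exact mul_right_cancel₀ hr1 h1'
        left; rw [hγ1, hδ1]
      · left
        have h2' : γ * r2 = δ * r2 := by linear_combination B2
        exact mul_right_cancel₀ hr2 h2'
  · rintro (h | h)
    · -- γ = δ : map Bg i ↦ Bd i
      subst h
      apply lieEquivOfBasis Bg (Bg.equiv Bd (Equiv.refl _))
      intro i j
      fin_cases i <;> fin_cases j <;>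
        simp [Module.Basis.equiv_apply, hg1, hg2, hg3, skg1, skg2, skg3, hd1, hd2, hd3,
          skd1, skd2, skd3, lie_self]
    · -- γ = δ⁻¹ : map Bg 0 ↦ γ • Bd 0, Bg 1 ↦ Bd 2, Bg 2 ↦ Bd 1
      have hγδ : γ * δ = 1 := by rw [h]; field_simp
      set B' : Module.Basis (Fin 3) ℂ Ld :=
        (Bd.reindex (Equiv.swap 1 2)).unitsSMul ![Units.mk0 γ hγ, 1, 1] with hB'
      have hB'0 : B' 0 = γ • Bd 0 := by
        simp [hB', Module.Basis.unitsSMul_apply, Equiv.swap_apply_def]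
      have hB'1 : B' 1 = Bd 2 := by
        simp [hB', Module.Basis.unitsSMul_apply, Equiv.swap_apply_def]
      have hB'2 : B' 2 = Bd 1 := by
        simp [hB', Module.Basis.unitsSMul_apply, Equiv.swap_apply_def]
      apply lieEquivOfBasis Bg (Bg.equiv B' (Equiv.refl _))
      intro i j
      fin_cases i <;> fin_cases j <;>
        simp [Module.Basis.equiv_apply, hB'0, hB'1, hB'2, hg1, hg2, hg3, skg1, skg2, skg3,
          hd1, hd2, hd3, skd1, skd2, skd3, lie_self, smul_smul, hγδ, mul_comm γ δ]
end
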